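/- arXiv:1103.3722 — 2 statements merged into one kernel-verified Lean document; each statement's English description precedes it below -/
import Mathlib

section
/- Variance bound for the conditioned function, first order (Proposition 3.2 i). Let ℓ₀ ∈ ℕ, let f : {0,1}^ℤ → ℝ be a local function with supp(f) ⊆ {1,…,ℓ₀}, and fix ρ ∈ (0,1) with φ_f(ρ) = 0. Then there exists a constant c = c(f,ρ) such that Var(ψ_f(ℓ); ν_ρ) ≤ c/ℓ for every ℓ ≥ ℓ₀. -/
open MeasureTheory Finset

noncomputable section

/-- Configurations of the lattice gas: elements of `{0,1}^ℤ`, encoded as `ℤ → Bool`. -/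
abbrev Cfg : Type := ℤ → Bool

/-- The configuration whose occupied sites are exactly the finite set `S`. -/
def cfgOf (S : Finset ℤ) : Cfg := fun z => decide (z ∈ S)

/-- `f` depends only on the coordinates in the finite set `A`
(i.e. `f` is local with `supp f ⊆ A`). -/
def LocalOn (A : Finset ℤ) (f : Cfg → ℝ) : Prop :=
  ∀ η ξ : Cfg, (∀ x ∈ A, η x = ξ x) → f η = f ξ

/-- `f` is a local function. -/
def IsLocal (f : Cfg → ℝ) : Prop := ∃ A : Finset ℤ, LocalOn A f

/-- For `f` depending only on the coordinates in `A`, `phi A f β = ∫ f dν_β` where `ν_β`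
is the Bernoulli product measure of density `β`; written as an explicit polynomial in `β`. -/
def phi (A : Finset ℤ) (f : Cfg → ℝ) (β : ℝ) : ℝ :=
  ∑ S ∈ A.powerset, β ^ S.card * (1 - β) ^ (A.card - S.card) * f (cfgOf S)

/-- `ψ_f(ℓ; m)`: the average of `f` over all configurations of `{1,…,ℓ}`
having exactly `m` particles. -/
def condAvg (ℓ m : ℕ) (f : Cfg → ℝ) : ℝ :=
  (∑ S ∈ (Finset.Icc (1 : ℤ) (ℓ : ℤ)).powerset.filter (fun S => S.card = m), f (cfgOf S))
    / (ℓ.choose m : ℝ)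

/-- `μ` is the product Bernoulli measure on `{0,1}^ℤ` of density `ρ`: it is a probability
measure under which the coordinates are i.i.d. with `μ(η x = 1) = ρ`. -/
def IsBernoulliProduct (ρ : ℝ) (μ : Measure Cfg) : Prop :=
  IsProbabilityMeasure μ ∧
    ∀ (A : Finset ℤ) (σ : Cfg),
      (μ {η : Cfg | ∀ x ∈ A, η x = σ x}).toReal
        = ∏ x ∈ A, (if σ x then ρ else 1 - ρ)

/-- The number of particles of `η` in `{1,…,ℓ}`. -/
def numOnes (ℓ : ℕ) (η : Cfg) : ℕ := ∑ x ∈ Finset.Icc (1 : ℤ) (ℓ : ℤ), (η x).toNat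

/-- The empirical density `η^ℓ` of particles in `{1,…,ℓ}`. -/
def empDens (ℓ : ℕ) (η : Cfg) : ℝ := (numOnes ℓ η : ℝ) / (ℓ : ℝ)

/-- `ψ_f(ℓ)`: the conditional expectation of `f` given the particle number in `{1,…,ℓ}`,
as a function on configurations. -/
def psiFun (ℓ : ℕ) (f : Cfg → ℝ) : Cfg → ℝ := fun η => condAvg ℓ (numOnes ℓ η) f

/-- The variance of `g` with respect to the measure `μ`. -/
def Var (μ : Measure Cfg) (g : Cfg → ℝ) : ℝ := ∫ η, (g η - ∫ ξ, g ξ ∂μ) ^ 2 ∂μ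

/- ### Auxiliary lemmas -/

set_option maxHeartbeats 1000000

lemma card_IccZ (n : ℕ) : (Finset.Icc (1:ℤ) (n:ℤ)).card = n := by
  rw [Int.card_Icc]; omega

/-- product difference bound for factors in [0,1] -/
lemma abs_prod_sub_prod (n : ℕ) (a b : ℕ → ℝ)
    (ha : ∀ i ∈ range n, a i ∈ Set.Icc (0:ℝ) 1)
    (hb : ∀ i ∈ range n, b i ∈ Set.Icc (0:ℝ) 1) :
    |∏ i ∈ range n, a i - ∏ i ∈ range n, b i| ≤ ∑ i ∈ range n, |a i - b i| := by
  induction n with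
  | zero => simp
  | succ n ih =>
    have ha' : ∀ i ∈ range n, a i ∈ Set.Icc (0:ℝ) 1 := fun i hi => ha i (by
      simp at hi ⊢; omega)
    have hb' : ∀ i ∈ range n, b i ∈ Set.Icc (0:ℝ) 1 := fun i hi => hb i (by
      simp at hi ⊢; omega)
    have hPa : (∏ i ∈ range n, a i) ∈ Set.Icc (0:ℝ) 1 := by
      constructor
      · exact Finset.prod_nonneg fun i hi => (ha' i hi).1
      · exact Finset.prod_le_one (fun i hi => (ha' i hi).1) (fun i hi => (ha' i hi).2)
    have han : a n ∈ Set.Icc (0:ℝ) 1 := ha n (by simp)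
    have hbn : b n ∈ Set.Icc (0:ℝ) 1 := hb n (by simp)
    rw [prod_range_succ, prod_range_succ, sum_range_succ]
    have key : (∏ i ∈ range n, a i) * a n - (∏ i ∈ range n, b i) * b n
        = (∏ i ∈ range n, a i) * (a n - b n)
          + ((∏ i ∈ range n, a i) - ∏ i ∈ range n, b i) * b n := by ring
    rw [key]
    have h1 : |(∏ i ∈ range n, a i) * (a n - b n)| ≤ 1 * |a n - b n| := by
      rw [abs_mul]
      apply mul_le_mul_of_nonneg_right _ (abs_nonneg _)
      rw [abs_of_nonneg hPa.1]; exact hPa.2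
    have h2 : |((∏ i ∈ range n, a i) - ∏ i ∈ range n, b i) * b n|
        ≤ (∑ i ∈ range n, |a i - b i|) * 1 := by
      rw [abs_mul]
      apply mul_le_mul (ih ha' hb') _ (abs_nonneg _)
        (Finset.sum_nonneg fun i _ => abs_nonneg _)
      rw [abs_of_nonneg hbn.1]; exact hbn.2
    calc _ ≤ |(∏ i ∈ range n, a i) * (a n - b n)|
          + |((∏ i ∈ range n, a i) - ∏ i ∈ range n, b i) * b n| := abs_add_le _ _
      _ ≤ 1 * |a n - b n| + (∑ i ∈ range n, |a i - b i|) * 1 := add_le_add h1 h2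
      _ = (∑ i ∈ range n, |a i - b i|) + |a n - b n| := by ring

lemma prod_if_lt (x y : ℝ) (k n : ℕ) (h : k ≤ n) :
    ∏ i ∈ range n, (if i < k then x else y) = x ^ k * y ^ (n - k) := by
  rw [← Finset.prod_range_mul_prod_Ico _ h]
  congr 1
  · rw [Finset.prod_congr rfl (fun i hi => if_pos (mem_range.mp hi)), prod_const, card_range]
  · rw [Finset.prod_congr rfl (fun i hi => if_neg (by simp at hi; omega)), prod_const,
      Nat.card_Ico]

/-- Lipschitz bound for Bernstein-type terms. -/
lemma bern_lipschitz (α β : ℝ) (hα : α ∈ Set.Icc (0:ℝ) 1) (hβ : β ∈ Set.Icc (0:ℝ) 1)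
    (k n : ℕ) (h : k ≤ n) :
    |α ^ k * (1 - α) ^ (n - k) - β ^ k * (1 - β) ^ (n - k)| ≤ n * |α - β| := by
  have := abs_prod_sub_prod n (fun i => if i < k then α else 1 - α)
    (fun i => if i < k then β else 1 - β)
    (fun i _ => by
      split <;> constructor <;> first | exact hα.1 | linarith [hα.1, hα.2])
    (fun i _ => by
      split <;> constructor <;> first | exact hβ.1 | linarith [hβ.1, hβ.2])
  rw [prod_if_lt _ _ _ _ h, prod_if_lt _ _ _ _ h] at this
  refine this.trans ?_
  calc ∑ i ∈ range n, |(if i < k then α else 1-α) - (if i < k then β else 1-β)|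
      ≤ ∑ _i ∈ range n, |α - β| := by
        refine Finset.sum_le_sum fun i _ => ?_
        split
        · exact le_refl _
        · rw [show (1-α) - (1-β) = -(α - β) by ring, abs_neg]
    _ = n * |α - β| := by rw [sum_const, card_range, nsmul_eq_mul]

lemma natid {ℓ ℓ₀ m k : ℕ} (hkm : k ≤ m) (h1 : ℓ₀ ≤ ℓ) (hm : m ≤ ℓ)
    (h2 : m - k ≤ ℓ - ℓ₀) (hk0 : k ≤ ℓ₀) :
    (ℓ - ℓ₀).choose (m - k) * ℓ.descFactorial ℓ₀
      = ℓ.choose m * (m.descFactorial k * (ℓ - m).descFactorial (ℓ₀ - k)) := by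
  have h3 : ℓ₀ - k ≤ ℓ - m := by omega
  have hsub : (ℓ - m) - (ℓ₀ - k) = (ℓ - ℓ₀) - (m - k) := by omega
  have c1 := Nat.choose_mul_factorial_mul_factorial h2
  have c2 := Nat.choose_mul_factorial_mul_factorial hm
  have d1 := Nat.factorial_mul_descFactorial h1
  have e1 := Nat.factorial_mul_descFactorial hkm
  have e2 := Nat.factorial_mul_descFactorial h3
  apply Nat.eq_of_mul_eq_mul_right
    (Nat.mul_pos (Nat.factorial_pos (m-k)) (Nat.factorial_pos ((ℓ-m)-(ℓ₀-k))))
  calc (ℓ - ℓ₀).choose (m - k) * ℓ.descFactorial ℓ₀ * (Nat.factorial (m-k) * Nat.factorial ((ℓ-m)-(ℓ₀-k)))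
      = ((ℓ-ℓ₀).choose (m-k) * Nat.factorial (m-k) * Nat.factorial ((ℓ-ℓ₀)-(m-k))) * ℓ.descFactorial ℓ₀ := by
        rw [hsub]; ring
    _ = Nat.factorial (ℓ-ℓ₀) * ℓ.descFactorial ℓ₀ := by rw [c1]
    _ = Nat.factorial ℓ := d1
    _ = ℓ.choose m * (Nat.factorial m * Nat.factorial (ℓ-m)) := by rw [← c2]; ring
    _ = ℓ.choose m * ((Nat.factorial (m-k) * m.descFactorial k)
          * (Nat.factorial ((ℓ-m)-(ℓ₀-k)) * (ℓ-m).descFactorial (ℓ₀-k))) := by rw [e1, e2]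
    _ = ℓ.choose m * (m.descFactorial k * (ℓ - m).descFactorial (ℓ₀ - k))
          * (Nat.factorial (m-k) * Nat.factorial ((ℓ-m)-(ℓ₀-k))) := by ring

lemma descFactorial_cast_prod (n j : ℕ) (h : j ≤ n) :
    ((n.descFactorial j : ℕ) : ℝ) = ∏ i ∈ range j, ((n:ℝ) - i) := by
  rw [Nat.descFactorial_eq_prod_range, Nat.cast_prod]
  exact Finset.prod_congr rfl fun i hi => by
    have : i ≤ n := by simp at hi; omega
    push_cast [Nat.cast_sub this]; ring

lemma choose_ratio {ℓ ℓ₀ m k : ℕ} (hkm : k ≤ m) (h1 : ℓ₀ ≤ ℓ) (hm : m ≤ ℓ)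
    (h2 : m - k ≤ ℓ - ℓ₀) (hk0 : k ≤ ℓ₀) :
    ((ℓ - ℓ₀).choose (m - k) : ℝ) / (ℓ.choose m : ℝ)
      = ∏ i ∈ range ℓ₀,
          ((if i < k then (m:ℝ) - i else ((ℓ:ℝ) - m) - ((i:ℝ) - k)) / ((ℓ:ℝ) - i)) := by
  have h3 : ℓ₀ - k ≤ ℓ - m := by omega
  have hch : (0:ℝ) < (ℓ.choose m : ℝ) := by exact_mod_cast Nat.choose_pos hm
  have hdf : (0:ℝ) < (ℓ.descFactorial ℓ₀ : ℝ) := by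
    have : ℓ.descFactorial ℓ₀ ≠ 0 := by
      intro h
      exact absurd (Nat.descFactorial_eq_zero_iff_lt.mp h) (by omega)
    exact_mod_cast Nat.pos_of_ne_zero this
  have hnum : ∏ i ∈ range ℓ₀, (if i < k then (m:ℝ) - i else ((ℓ:ℝ) - m) - ((i:ℝ) - k))
      = (m.descFactorial k : ℝ) * ((ℓ - m).descFactorial (ℓ₀ - k) : ℝ) := by
    rw [← Finset.prod_range_mul_prod_Ico _ hk0]
    congr 1
    · rw [descFactorial_cast_prod m k hkm]
      exact Finset.prod_congr rfl fun i hi => if_pos (mem_range.mp hi)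
    · rw [Finset.prod_Ico_eq_prod_range, descFactorial_cast_prod (ℓ - m) (ℓ₀ - k) h3]
      refine Finset.prod_congr rfl fun j hj => ?_
      rw [if_neg (by omega)]
      have : ((ℓ - m : ℕ) : ℝ) = (ℓ:ℝ) - m := by
        push_cast [Nat.cast_sub hm]; ring
      rw [this]; push_cast; ring
  have hden : ∏ i ∈ range ℓ₀, ((ℓ:ℝ) - i) = (ℓ.descFactorial ℓ₀ : ℝ) :=
    (descFactorial_cast_prod ℓ ℓ₀ h1).symm
  rw [Finset.prod_div_distrib, hnum, hden, div_eq_div_iff hch.ne' hdf.ne']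
  have h := congrArg (Nat.cast (R := ℝ)) (natid hkm h1 hm h2 hk0)
  push_cast at h
  linarith

lemma hyper_close {ℓ ℓ₀ m k : ℕ} (hk : k ≤ ℓ₀) (hm : m ≤ ℓ) (hℓ : 2*ℓ₀ ≤ ℓ)
    (hℓ1 : 1 ≤ ℓ) :
    |(if k ≤ m then ((ℓ - ℓ₀).choose (m - k) : ℝ) else 0)/(ℓ.choose m : ℝ)
      - ((m:ℝ)/ℓ)^k * (1 - (m:ℝ)/ℓ)^(ℓ₀-k)| ≤ 2*(ℓ₀:ℝ)^2/ℓ := by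
  have hℓR : (0:ℝ) < ℓ := by exact_mod_cast hℓ1
  have hmR : (m:ℝ) ≤ ℓ := by exact_mod_cast hm
  have hα0 : (0:ℝ) ≤ (m:ℝ)/ℓ := by positivity
  have hα1 : (m:ℝ)/ℓ ≤ 1 := by rw [div_le_one hℓR]; exact hmR
  have hcast : 2*(ℓ₀:ℝ) ≤ ℓ := by exact_mod_cast hℓ
  by_cases hkm : k ≤ m
  · by_cases h2 : m - k ≤ ℓ - ℓ₀
    · -- main case
      rw [if_pos hkm, choose_ratio hkm (by omega) hm h2 hk, ← prod_if_lt ((m:ℝ)/ℓ) (1 - (m:ℝ)/ℓ) k ℓ₀ hk]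
      have key : ∀ i ∈ range ℓ₀,
          ((if i < k then (m:ℝ) - i else ((ℓ:ℝ) - m) - ((i:ℝ) - k)) / ((ℓ:ℝ) - i))
            ∈ Set.Icc (0:ℝ) 1 ∧
          |((if i < k then (m:ℝ) - i else ((ℓ:ℝ) - m) - ((i:ℝ) - k)) / ((ℓ:ℝ) - i))
            - (if i < k then (m:ℝ)/ℓ else 1 - (m:ℝ)/ℓ)| ≤ 2*(ℓ₀:ℝ)/ℓ := by
        intro i hi
        have hi' : i < ℓ₀ := mem_range.mp hi
        have hiR : (i:ℝ) ≤ ℓ₀ := by exact_mod_cast hi'.le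
        have hiℓ : (i:ℝ) < ℓ := by exact_mod_cast (by omega : i < ℓ)
        have hd : (0:ℝ) < (ℓ:ℝ) - i := by linarith
        have hd2 : (ℓ:ℝ)/2 ≤ (ℓ:ℝ) - i := by linarith
        have hd2' : (0:ℝ) < (ℓ:ℝ)/2 * ℓ := by positivity
        have hdenom : (ℓ:ℝ)/2 * ℓ ≤ |((ℓ:ℝ) - i) * ℓ| := by
          rw [abs_of_nonneg (by positivity)]
          apply mul_le_mul_of_nonneg_right hd2 hℓR.le
        have hfrac : ((ℓ₀:ℝ)*ℓ) / ((ℓ:ℝ)/2 * ℓ) = 2*(ℓ₀:ℝ)/ℓ := by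
          field_simp
        by_cases hik : i < k
        · have hmi : (i:ℝ) < m := by exact_mod_cast (by omega : i < m)
          constructor
          · rw [if_pos hik]
            constructor
            · exact div_nonneg (by linarith) hd.le
            · rw [div_le_one hd]; linarith
          · rw [if_pos hik, if_pos hik]
            have e : ((m:ℝ) - i) / ((ℓ:ℝ) - i) - (m:ℝ)/ℓ
                = ((i:ℝ)*((m:ℝ)-ℓ))/(((ℓ:ℝ)-i)*ℓ) := by
              field_simp
              ring
            rw [e, abs_div, ← hfrac]
            apply div_le_div₀ (by positivity) _ hd2' hdenom
            rw [abs_mul, abs_of_nonneg (by positivity : (0:ℝ) ≤ (i:ℝ)),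
              abs_of_nonpos (by linarith : (m:ℝ) - ℓ ≤ 0)]
            apply mul_le_mul hiR (by linarith) (by linarith) (by positivity)
        · have hkR : (k:ℝ) ≤ i := by exact_mod_cast (by omega : k ≤ i)
          have hkm' : (k:ℝ) ≤ m := by exact_mod_cast hkm
          have hik2 : (i:ℝ) - k ≤ (ℓ:ℝ) - m := by
            have : (i:ℕ) - k ≤ ℓ - m := by omega
            have h' : ((i:ℕ) - k : ℕ) = i - k := rfl
            have c1 : ((i - k : ℕ) : ℝ) = (i:ℝ) - k := by
              push_cast [Nat.cast_sub (by omega : k ≤ i)]; ring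
            have c2 : ((ℓ - m : ℕ) : ℝ) = (ℓ:ℝ) - m := by
              push_cast [Nat.cast_sub hm]; ring
            calc (i:ℝ) - k = ((i - k : ℕ) : ℝ) := c1.symm
              _ ≤ ((ℓ - m : ℕ) : ℝ) := by exact_mod_cast this
              _ = (ℓ:ℝ) - m := c2
          constructor
          · rw [if_neg hik]
            constructor
            · apply div_nonneg _ hd.le
              linarith
            · rw [div_le_one hd]; linarith
          · rw [if_neg hik, if_neg hik]
            have e : (((ℓ:ℝ) - m) - ((i:ℝ) - k)) / ((ℓ:ℝ) - i) - (1 - (m:ℝ)/ℓ)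
                = ((k:ℝ)*ℓ - (m:ℝ)*i)/(((ℓ:ℝ)-i)*ℓ) := by
              field_simp
              ring
            rw [e, abs_div, ← hfrac]
            apply div_le_div₀ (by positivity) _ hd2' hdenom
            have hkℓ₀ : (k:ℝ) ≤ ℓ₀ := by exact_mod_cast hk
            rw [abs_le]
            constructor
            · nlinarith [mul_le_mul hmR hiR (by positivity : (0:ℝ) ≤ (i:ℝ)) hℓR.le]
            · nlinarith [mul_le_mul hkℓ₀ (le_refl (ℓ:ℝ)) hℓR.le (by positivity : (0:ℝ) ≤ (ℓ₀:ℝ))]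
      calc |(∏ i ∈ range ℓ₀, ((if i < k then (m:ℝ) - i else ((ℓ:ℝ) - m) - ((i:ℝ) - k)) / ((ℓ:ℝ) - i)))
            - ∏ i ∈ range ℓ₀, (if i < k then (m:ℝ)/ℓ else 1 - (m:ℝ)/ℓ)|
          ≤ ∑ i ∈ range ℓ₀, |((if i < k then (m:ℝ) - i else ((ℓ:ℝ) - m) - ((i:ℝ) - k)) / ((ℓ:ℝ) - i))
            - (if i < k then (m:ℝ)/ℓ else 1 - (m:ℝ)/ℓ)| := by
            apply abs_prod_sub_prod
            · exact fun i hi => (key i hi).1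
            · intro i hi
              constructor
              · split <;> [exact hα0; linarith]
              · split <;> [exact hα1; linarith]
        _ ≤ ∑ _i ∈ range ℓ₀, 2*(ℓ₀:ℝ)/ℓ := Finset.sum_le_sum fun i hi => (key i hi).2
        _ = 2*(ℓ₀:ℝ)^2/ℓ := by
            rw [sum_const, card_range, nsmul_eq_mul]
            field_simp
    · -- edge case B : choose = 0
      have hzero : (ℓ - ℓ₀).choose (m - k) = 0 := Nat.choose_eq_zero_of_lt (by omega)
      rw [if_pos hkm, hzero]
      have hk' : k < ℓ₀ := by omega
      have h1ℓ₀ : 1 ≤ ℓ₀ := by omega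
      have hv0 : (0:ℝ) ≤ ((m:ℝ)/ℓ)^k * (1 - (m:ℝ)/ℓ)^(ℓ₀-k) :=
        mul_nonneg (pow_nonneg hα0 _) (pow_nonneg (by linarith) _)
      have h1ℓ₀R : (1:ℝ) ≤ (ℓ₀:ℝ) := by exact_mod_cast h1ℓ₀
      have hbound : ((m:ℝ)/ℓ)^k * (1 - (m:ℝ)/ℓ)^(ℓ₀-k) ≤ 2*(ℓ₀:ℝ)^2/ℓ := by
        have h1α : (1:ℝ) - (m:ℝ)/ℓ ≤ (ℓ₀:ℝ)/ℓ := by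
          have hlm : (ℓ:ℝ) - m ≤ ℓ₀ := by
            have hn : ℓ - m ≤ ℓ₀ := by omega
            calc (ℓ:ℝ) - m = ((ℓ - m : ℕ) : ℝ) := by
                  push_cast [Nat.cast_sub hm]; ring
              _ ≤ ℓ₀ := by exact_mod_cast hn
          have he : (1:ℝ) - (m:ℝ)/ℓ = ((ℓ:ℝ) - m)/ℓ := by field_simp
          rw [he]
          gcongr
        calc ((m:ℝ)/ℓ)^k * (1 - (m:ℝ)/ℓ)^(ℓ₀-k)
            ≤ 1 * (1 - (m:ℝ)/ℓ)^(ℓ₀-k) := by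
              exact mul_le_mul_of_nonneg_right (pow_le_one₀ hα0 hα1)
                (pow_nonneg (by linarith) _)
          _ = (1 - (m:ℝ)/ℓ)^(ℓ₀-k) := one_mul _
          _ ≤ (1 - (m:ℝ)/ℓ)^1 := by
              apply pow_le_pow_of_le_one (by linarith) (by linarith) (by omega)
          _ = 1 - (m:ℝ)/ℓ := pow_one _
          _ ≤ (ℓ₀:ℝ)/ℓ := h1α
          _ ≤ 2*(ℓ₀:ℝ)^2/ℓ :=
              div_le_div₀ (by positivity) (by nlinarith) hℓR le_rfl
      rw [Nat.cast_zero, zero_div, zero_sub, abs_neg, abs_of_nonneg hv0]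
      exact hbound
  · -- edge case A : m < k
    rw [if_neg hkm, zero_div, zero_sub, abs_neg]
    have hk1 : 1 ≤ k := by omega
    have h1ℓ₀ : 1 ≤ ℓ₀ := by omega
    have hv0 : (0:ℝ) ≤ ((m:ℝ)/ℓ)^k * (1 - (m:ℝ)/ℓ)^(ℓ₀-k) :=
      mul_nonneg (pow_nonneg hα0 _) (pow_nonneg (by linarith) _)
    rw [abs_of_nonneg hv0]
    have h1ℓ₀R : (1:ℝ) ≤ (ℓ₀:ℝ) := by exact_mod_cast h1ℓ₀
    have hα' : (m:ℝ)/ℓ ≤ (ℓ₀:ℝ)/ℓ := by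
      gcongr
      exact_mod_cast (by omega : m ≤ ℓ₀)
    calc ((m:ℝ)/ℓ)^k * (1 - (m:ℝ)/ℓ)^(ℓ₀-k)
        ≤ ((m:ℝ)/ℓ)^k * 1 := by
          exact mul_le_mul_of_nonneg_left (pow_le_one₀ (by linarith) (by linarith))
            (pow_nonneg hα0 _)
      _ = ((m:ℝ)/ℓ)^k := mul_one _
      _ ≤ ((m:ℝ)/ℓ)^1 := pow_le_pow_of_le_one hα0 hα1 hk1
      _ = (m:ℝ)/ℓ := pow_one _
      _ ≤ (ℓ₀:ℝ)/ℓ := hα'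
      _ ≤ 2*(ℓ₀:ℝ)^2/ℓ :=
          div_le_div₀ (by positivity) (by nlinarith) hℓR le_rfl

lemma fiber_card (box box₀ : Finset ℤ) (hsub : box₀ ⊆ box) (m : ℕ) (T : Finset ℤ)
    (hT : T ⊆ box₀) :
    ((Finset.powersetCard m box).filter (fun S => S ∩ box₀ = T)).card
      = if T.card ≤ m then (box.card - box₀.card).choose (m - T.card) else 0 := by
  by_cases htm : T.card ≤ m
  · rw [if_pos htm, ← Finset.card_sdiff_of_subset hsub, ← Finset.card_powersetCard]
    apply Finset.card_bij' (fun S _ => S \ box₀) (fun R _ => T ∪ R)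
    · intro S hS
      simp only [mem_filter, Finset.mem_powersetCard] at hS
      obtain ⟨⟨hSbox, hScard⟩, hfib⟩ := hS
      rw [Finset.mem_powersetCard]
      constructor
      · intro x hx
        simp only [Finset.mem_sdiff] at hx ⊢
        exact ⟨hSbox hx.1, hx.2⟩
      · have := Finset.card_inter_add_card_sdiff S box₀
        rw [hfib] at this
        omega
    · intro R hR
      rw [Finset.mem_powersetCard] at hR
      obtain ⟨hRsub, hRcard⟩ := hR
      have hdisj : Disjoint T R := by
        rw [Finset.disjoint_left]
        intro x hxT hxR
        exact (Finset.mem_sdiff.mp (hRsub hxR)).2 (hT hxT)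
      simp only [mem_filter, Finset.mem_powersetCard]
      refine ⟨⟨?_, ?_⟩, ?_⟩
      · intro x hx
        rcases Finset.mem_union.mp hx with h | h
        · exact hsub (hT h)
        · exact (Finset.mem_sdiff.mp (hRsub h)).1
      · rw [Finset.card_union_of_disjoint hdisj, hRcard]; omega
      · ext x
        simp only [Finset.mem_inter, Finset.mem_union]
        constructor
        · rintro ⟨h | h, hx₀⟩
          · exact h
          · exact absurd hx₀ (Finset.mem_sdiff.mp (hRsub h)).2
        · intro h
          exact ⟨Or.inl h, hT h⟩
    · intro S hS
      simp only [mem_filter, Finset.mem_powersetCard] at hS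
      obtain ⟨⟨hSbox, hScard⟩, hfib⟩ := hS
      ext x
      simp only [Finset.mem_union, Finset.mem_sdiff, ← hfib, Finset.mem_inter]
      by_cases hx : x ∈ box₀ <;> tauto
    · intro R hR
      rw [Finset.mem_powersetCard] at hR
      obtain ⟨hRsub, hRcard⟩ := hR
      ext x
      have : x ∈ R → x ∉ box₀ := fun h => (Finset.mem_sdiff.mp (hRsub h)).2
      simp only [Finset.mem_sdiff, Finset.mem_union]
      by_cases hx : x ∈ box₀ <;> tauto
  · rw [if_neg htm, Finset.card_eq_zero, Finset.filter_eq_empty_iff]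
    intro S hS
    rw [Finset.mem_powersetCard] at hS
    intro hfib
    have : T.card ≤ S.card := by
      rw [← hfib]
      exact Finset.card_le_card Finset.inter_subset_left
    omega

lemma condAvg_formula (ℓ₀ ℓ m : ℕ) (h : ℓ₀ ≤ ℓ) (hm : m ≤ ℓ) (f : Cfg → ℝ)
    (hf : LocalOn (Finset.Icc (1 : ℤ) (ℓ₀ : ℤ)) f) :
    condAvg ℓ m f = ∑ T ∈ (Finset.Icc (1 : ℤ) (ℓ₀ : ℤ)).powerset,
      (if T.card ≤ m then ((ℓ - ℓ₀).choose (m - T.card) : ℝ) else 0) / (ℓ.choose m : ℝ)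
        * f (cfgOf T) := by
  set box := Finset.Icc (1 : ℤ) (ℓ : ℤ) with hbox
  set box₀ := Finset.Icc (1 : ℤ) (ℓ₀ : ℤ) with hbox₀
  have hsub : box₀ ⊆ box := Finset.Icc_subset_Icc le_rfl (by exact_mod_cast h)
  have hnum : ∑ S ∈ box.powerset.filter (fun S => S.card = m), f (cfgOf S)
      = ∑ T ∈ box₀.powerset,
          ((if T.card ≤ m then ((ℓ - ℓ₀).choose (m - T.card) : ℝ) else 0)) * f (cfgOf T) := by
    rw [← Finset.powersetCard_eq_filter]
    have step1 : ∑ S ∈ Finset.powersetCard m box, f (cfgOf S)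
        = ∑ S ∈ Finset.powersetCard m box, f (cfgOf (S ∩ box₀)) := by
      refine Finset.sum_congr rfl fun S _ => ?_
      apply hf
      intro x hx
      simp only [cfgOf]
      apply decide_eq_decide.mpr
      simp only [Finset.mem_inter]
      tauto
    rw [step1,
      ← Finset.sum_fiberwise_of_maps_to (g := fun S => S ∩ box₀)
        (fun S _ => Finset.mem_powerset.mpr Finset.inter_subset_right)
        (fun S => f (cfgOf (S ∩ box₀)))]
    refine Finset.sum_congr rfl fun T hT => ?_
    rw [Finset.mem_powerset] at hT
    have inner : ∑ S ∈ (Finset.powersetCard m box).filter (fun S => S ∩ box₀ = T),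
        f (cfgOf (S ∩ box₀))
        = ∑ S ∈ (Finset.powersetCard m box).filter (fun S => S ∩ box₀ = T),
            f (cfgOf T) := by
      refine Finset.sum_congr rfl fun S hS => ?_
      rw [(Finset.mem_filter.mp hS).2]
    rw [inner, Finset.sum_const, fiber_card box box₀ hsub m T hT, nsmul_eq_mul]
    rw [card_IccZ, card_IccZ]
    split <;> simp
  rw [condAvg, hnum, Finset.sum_div]
  exact Finset.sum_congr rfl fun T _ => by rw [div_mul_eq_mul_div, mul_div_assoc]

lemma cyl_measurable (A : Finset ℤ) (σ : Cfg) :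
    MeasurableSet {η : Cfg | ∀ x ∈ A, η x = σ x} := by
  have : {η : Cfg | ∀ x ∈ A, η x = σ x} = ⋂ x ∈ (A : Set ℤ), {η : Cfg | η x = σ x} := by
    ext η; simp
  rw [this]
  refine MeasurableSet.biInter (A : Set ℤ).to_countable fun x _ => ?_
  show MeasurableSet ((fun η : Cfg => η x) ⁻¹' {σ x})
  exact (measurable_pi_apply x) (measurableSet_singleton (σ x))

lemma cyl_prob {ρ : ℝ} {μ : Measure Cfg} (hμ : IsBernoulliProduct ρ μ) (ℓ : ℕ)
    (S : Finset ℤ) (hS : S ⊆ Finset.Icc (1:ℤ) (ℓ:ℤ)) :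
    (μ {η : Cfg | ∀ x ∈ Finset.Icc (1:ℤ) (ℓ:ℤ), η x = cfgOf S x}).toReal
      = ρ ^ S.card * (1 - ρ) ^ (ℓ - S.card) := by
  rw [hμ.2]
  rw [← Finset.prod_sdiff hS]
  have h1 : ∏ x ∈ Finset.Icc (1:ℤ) (ℓ:ℤ) \ S, (if cfgOf S x then ρ else 1 - ρ)
      = (1 - ρ) ^ (ℓ - S.card) := by
    have e : ∀ x ∈ Finset.Icc (1:ℤ) (ℓ:ℤ) \ S,
        (if cfgOf S x then ρ else 1 - ρ) = 1 - ρ := by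
      intro x hx
      have hns : cfgOf S x ≠ true := by
        simp [cfgOf, (Finset.mem_sdiff.mp hx).2]
      rw [if_neg hns]
    rw [Finset.prod_congr rfl e, Finset.prod_const, Finset.card_sdiff_of_subset hS, card_IccZ]
  have h2 : ∏ x ∈ S, (if cfgOf S x then ρ else 1 - ρ) = ρ ^ S.card := by
    have e : ∀ x ∈ S, (if cfgOf S x then ρ else 1 - ρ) = ρ := by
      intro x hx
      have hs : cfgOf S x = true := by
        simp only [cfgOf, decide_eq_true_eq]; exact hx
      rw [if_pos hs]
    rw [Finset.prod_congr rfl e, Finset.prod_const]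
  rw [h1, h2]
  ring

lemma pointwise_decomp (ℓ : ℕ) (h : ℕ → ℝ) (η : Cfg) :
    h (numOnes ℓ η) = ∑ S ∈ (Finset.Icc (1:ℤ) (ℓ:ℤ)).powerset,
      Set.indicator {ξ : Cfg | ∀ x ∈ Finset.Icc (1:ℤ) (ℓ:ℤ), ξ x = cfgOf S x}
        (fun _ => h S.card) η := by
  set box := Finset.Icc (1:ℤ) (ℓ:ℤ)
  set S₀ := box.filter (fun x => η x = true) with hS₀
  have hmem : S₀ ∈ box.powerset := Finset.mem_powerset.mpr (Finset.filter_subset _ _)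
  rw [Finset.sum_eq_single_of_mem S₀ hmem]
  · have hηin : η ∈ {ξ : Cfg | ∀ x ∈ box, ξ x = cfgOf S₀ x} := by
      intro x hx
      simp only [cfgOf, hS₀, Finset.mem_filter]
      cases hη : η x <;> simp [hη, hx]
    rw [Set.indicator_of_mem hηin]
    congr 1
    rw [numOnes, hS₀, Finset.card_filter]
    exact Finset.sum_congr rfl fun x _ => by cases η x <;> simp
  · intro S hSmem hSne
    apply Set.indicator_of_notMem
    intro hηin
    apply hSne
    have hSsub := Finset.mem_powerset.mp hSmem
    ext x
    simp only [hS₀, Finset.mem_filter]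
    constructor
    · intro hxS
      have hxbox : x ∈ box := hSsub hxS
      refine ⟨hxbox, ?_⟩
      rw [hηin x hxbox]
      simp [cfgOf, hxS]
    · rintro ⟨hxbox, hηx⟩
      have := hηin x hxbox
      rw [hηx] at this
      simpa [cfgOf] using this.symm

lemma integral_comp_numOnes {ρ : ℝ} {μ : Measure Cfg} (hμ : IsBernoulliProduct ρ μ)
    (ℓ : ℕ) (h : ℕ → ℝ) :
    ∫ η, h (numOnes ℓ η) ∂μ
      = ∑ m ∈ range (ℓ+1), (ℓ.choose m : ℝ) * ρ^m * (1-ρ)^(ℓ-m) * h m := by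
  haveI : IsProbabilityMeasure μ := hμ.1
  set box := Finset.Icc (1:ℤ) (ℓ:ℤ) with hbox
  have step1 : ∫ η, h (numOnes ℓ η) ∂μ
      = ∑ S ∈ box.powerset, (μ {ξ : Cfg | ∀ x ∈ box, ξ x = cfgOf S x}).toReal • h S.card := by
    rw [show (fun η => h (numOnes ℓ η)) = fun η => ∑ S ∈ box.powerset,
        Set.indicator {ξ : Cfg | ∀ x ∈ box, ξ x = cfgOf S x} (fun _ => h S.card) η from
      funext (pointwise_decomp ℓ h)]
    rw [integral_finset_sum]
    · exact Finset.sum_congr rfl fun S _ => integral_indicator_const _ (cyl_measurable box (cfgOf S))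
    · intro S _
      exact (integrable_const (h S.card)).indicator (cyl_measurable box (cfgOf S))
  rw [step1]
  have step2 : ∀ S ∈ box.powerset,
      (μ {ξ : Cfg | ∀ x ∈ box, ξ x = cfgOf S x}).toReal • h S.card
        = ρ ^ S.card * (1-ρ)^(ℓ - S.card) * h S.card := by
    intro S hS
    rw [cyl_prob hμ ℓ S (Finset.mem_powerset.mp hS), smul_eq_mul]
  rw [Finset.sum_congr rfl step2]
  have := Finset.sum_powerset_apply_card (x := box)
    (f := fun c => ρ ^ c * (1-ρ)^(ℓ - c) * h c)
  rw [this, card_IccZ]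
  exact Finset.sum_congr rfl fun m _ => by rw [nsmul_eq_mul]; ring

lemma bern_eval (ρ : ℝ) (n m : ℕ) :
    (bernsteinPolynomial ℝ n m).eval ρ = (n.choose m : ℝ) * ρ^m * (1-ρ)^(n-m) := by
  simp [bernsteinPolynomial]

lemma w_sum (ρ : ℝ) (n : ℕ) :
    ∑ m ∈ range (n+1), (n.choose m : ℝ) * ρ^m * (1-ρ)^(n-m) = 1 := by
  have h := congrArg (Polynomial.eval ρ) (bernsteinPolynomial.sum ℝ n)
  rw [Polynomial.eval_finset_sum] at h
  simpa [bern_eval] using h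

lemma w_var (ρ : ℝ) (n : ℕ) :
    ∑ m ∈ range (n+1), ((n:ℝ)*ρ - m)^2 * ((n.choose m : ℝ) * ρ^m * (1-ρ)^(n-m))
      = n * ρ * (1-ρ) := by
  have h := congrArg (Polynomial.eval ρ) (bernsteinPolynomial.variance (R := ℝ) n)
  rw [Polynomial.eval_finset_sum] at h
  simp only [Polynomial.eval_mul, Polynomial.eval_pow, Polynomial.eval_sub,
    Polynomial.eval_smul, Polynomial.eval_natCast, Polynomial.eval_X, Polynomial.eval_one,
    bern_eval, smul_eq_mul, nsmul_eq_mul] at h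
  exact h


lemma sq_bound {x A B : ℝ} (hA : 0 ≤ A) (hB : 0 ≤ B) (h : |x| ≤ A + B) :
    x^2 ≤ 2*A^2 + 2*B^2 := by
  have h1 := abs_le.mp h
  nlinarith [sq_nonneg (A + B - x), sq_nonneg (A + B + x), sq_nonneg (A - B)]

/-- **Variance bound for the conditioned function, first order** (Proposition 3.2 i).
If `f` is local with support in `{1,…,ℓ₀}`, `ρ ∈ (0,1)` and `φ_f(ρ) = 0`, then there
is a constant `c = c(f,ρ)` such that `Var(ψ_f(ℓ); ν_ρ) ≤ c/ℓ` for every `ℓ ≥ ℓ₀`. -/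
theorem variance_psi_first_order
    (ℓ₀ : ℕ) (f : Cfg → ℝ) (hf : LocalOn (Finset.Icc (1 : ℤ) (ℓ₀ : ℤ)) f)
    (ρ : ℝ) (hρ : ρ ∈ Set.Ioo (0 : ℝ) 1)
    (hφ : phi (Finset.Icc (1 : ℤ) (ℓ₀ : ℤ)) f ρ = 0) :
    ∃ c : ℝ, ∀ μ : Measure Cfg, IsBernoulliProduct ρ μ → ∀ ℓ : ℕ, ℓ₀ ≤ ℓ →
      Var μ (psiFun ℓ f) ≤ c / (ℓ : ℝ) := by
  obtain ⟨hρ0, hρ1⟩ := hρ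
  classical
  set A₀ := Finset.Icc (1:ℤ) (ℓ₀:ℤ) with hA₀def
  set Cf := ∑ T ∈ A₀.powerset, |f (cfgOf T)| with hCfdef
  have hCf0 : 0 ≤ Cf := Finset.sum_nonneg fun T _ => abs_nonneg _
  set L := Cf * ℓ₀ with hLdef
  set K := Cf * (2*(ℓ₀:ℝ)^2) with hKdef
  have hL0 : 0 ≤ L := mul_nonneg hCf0 (Nat.cast_nonneg _)
  have hK0 : 0 ≤ K := mul_nonneg hCf0 (by positivity)
  have hA₀card : A₀.card = ℓ₀ := by rw [hA₀def, card_IccZ]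
  clear_value Cf L K
  refine ⟨2*L^2 + 2*K^2 + 8*Cf^2*(ℓ₀:ℝ), ?_⟩
  intro μ hμ ℓ hℓ
  haveI : IsProbabilityMeasure μ := hμ.1
  set g : ℕ → ℝ := fun m => condAvg ℓ m f with hgdef
  set w : ℕ → ℝ := fun m => (ℓ.choose m : ℝ) * ρ^m * (1-ρ)^(ℓ-m) with hwdef
  have hwnn : ∀ m, 0 ≤ w m := fun m =>
    mul_nonneg (mul_nonneg (Nat.cast_nonneg _) (pow_nonneg hρ0.le _))
      (pow_nonneg (by linarith) _)
  have hwsum : ∑ m ∈ range (ℓ+1), w m = 1 := w_sum ρ ℓ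
  set a := ∑ m ∈ range (ℓ+1), w m * g m with hadef
  have hInt : ∫ ξ, psiFun ℓ f ξ ∂μ = a := by
    calc ∫ ξ, psiFun ℓ f ξ ∂μ = ∫ η, g (numOnes ℓ η) ∂μ := rfl
      _ = ∑ m ∈ range (ℓ+1), (ℓ.choose m:ℝ) * ρ^m * (1-ρ)^(ℓ-m) * g m :=
          integral_comp_numOnes hμ ℓ g
      _ = a := rfl
  have hVar : Var μ (psiFun ℓ f) = ∑ m ∈ range (ℓ+1), w m * (g m - a)^2 := by
    calc Var μ (psiFun ℓ f) = ∫ η, (psiFun ℓ f η - ∫ ξ, psiFun ℓ f ξ ∂μ)^2 ∂μ := rfl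
      _ = ∫ η, (fun m => (g m - a)^2) (numOnes ℓ η) ∂μ := by rw [hInt]; rfl
      _ = ∑ m ∈ range (ℓ+1), (ℓ.choose m:ℝ) * ρ^m * (1-ρ)^(ℓ-m) * (g m - a)^2 :=
          integral_comp_numOnes hμ ℓ (fun m => (g m - a)^2)
      _ = ∑ m ∈ range (ℓ+1), w m * (g m - a)^2 := rfl
  rcases Nat.eq_zero_or_pos ℓ with hℓ0 | hℓpos
  · subst hℓ0
    have ha0 : a = g 0 := by
      rw [hadef]
      simp [hwdef]
    have hVar0 : ∑ m ∈ range (0+1), w m * (g m - a)^2 = 0 := by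
      simp [ha0]
    rw [hVar, hVar0]
    simp
  have hℓR : (0:ℝ) < ℓ := by exact_mod_cast hℓpos
  have hsum_sq : Var μ (psiFun ℓ f) ≤ ∑ m ∈ range (ℓ+1), w m * (g m)^2 := by
    rw [hVar]
    have e2 : ∑ m ∈ range (ℓ+1), w m * (g m - a)^2
        = ∑ m ∈ range (ℓ+1), w m * (g m)^2 - 2*a*a + a^2*1 := by
      rw [Finset.sum_congr rfl (fun m (_ : m ∈ range (ℓ+1)) =>
        (by ring : w m * (g m - a)^2 = w m * (g m)^2 - 2*a*(w m * g m) + a^2 * w m))]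
      rw [Finset.sum_add_distrib, Finset.sum_sub_distrib, ← Finset.mul_sum, ← Finset.mul_sum,
        hwsum, ← hadef]
    rw [e2]
    nlinarith [sq_nonneg a]
  by_cases hbig : 2*ℓ₀ ≤ ℓ
  · -- main estimate
    have hphi : ∀ β : ℝ, phi A₀ f β
        = ∑ T ∈ A₀.powerset, β^T.card * (1-β)^(ℓ₀ - T.card) * f (cfgOf T) := by
      intro β
      rw [phi, hA₀card]
    have hvar_id : ∑ m ∈ range (ℓ+1), w m * ((m:ℝ)/ℓ - ρ)^2 = ρ*(1-ρ)/ℓ := by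
      have h := w_var ρ ℓ
      have e : ∀ m, w m * ((m:ℝ)/ℓ - ρ)^2
          = ((ℓ:ℝ)*ρ - m)^2 * ((ℓ.choose m : ℝ) * ρ^m * (1-ρ)^(ℓ-m)) / (ℓ:ℝ)^2 := by
        intro m
        rw [hwdef]
        field_simp
        ring
      rw [Finset.sum_congr rfl (fun m _ => e m), ← Finset.sum_div, h]
      field_simp
    have hgb : ∀ m ∈ range (ℓ+1), (g m)^2 ≤ 2*L^2*((m:ℝ)/ℓ - ρ)^2 + 2*(K/ℓ)^2 := by
      intro m hmr
      have hm : m ≤ ℓ := by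
        have := mem_range.mp hmr; omega
      set α := (m:ℝ)/ℓ with hαdef
      have hα0 : 0 ≤ α := by positivity
      have hα1 : α ≤ 1 := by
        rw [hαdef, div_le_one hℓR]; exact_mod_cast hm
      have hgm : g m = ∑ T ∈ A₀.powerset,
          (if T.card ≤ m then ((ℓ-ℓ₀).choose (m-T.card):ℝ) else 0)/(ℓ.choose m:ℝ)
            * f (cfgOf T) :=
        condAvg_formula ℓ₀ ℓ m hℓ hm f hf
      have h1 : |g m - phi A₀ f α| ≤ K/ℓ := by
        rw [hgm, hphi α, ← Finset.sum_sub_distrib]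
        calc |∑ T ∈ A₀.powerset,
              ((if T.card ≤ m then ((ℓ-ℓ₀).choose (m-T.card):ℝ) else 0)/(ℓ.choose m:ℝ)
                * f (cfgOf T) - α^T.card * (1-α)^(ℓ₀ - T.card) * f (cfgOf T))|
            ≤ ∑ T ∈ A₀.powerset,
              |((if T.card ≤ m then ((ℓ-ℓ₀).choose (m-T.card):ℝ) else 0)/(ℓ.choose m:ℝ)
                - α^T.card * (1-α)^(ℓ₀ - T.card))| * |f (cfgOf T)| := by
              refine (Finset.abs_sum_le_sum_abs _ _).trans (le_of_eq ?_)
              refine Finset.sum_congr rfl fun T hT => ?_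
              rw [← abs_mul]
              congr 1
              ring
          _ ≤ ∑ T ∈ A₀.powerset, (2*(ℓ₀:ℝ)^2/ℓ) * |f (cfgOf T)| := by
              refine Finset.sum_le_sum fun T hT => ?_
              have hk : T.card ≤ ℓ₀ := by
                rw [← hA₀card]
                exact Finset.card_le_card (Finset.mem_powerset.mp hT)
              exact mul_le_mul_of_nonneg_right
                (hyper_close hk hm hbig hℓpos) (abs_nonneg _)
          _ = K/ℓ := by
              rw [← Finset.mul_sum, ← hCfdef, hKdef]
              field_simp
      have h2 : |phi A₀ f α - phi A₀ f ρ| ≤ L * |α - ρ| := by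
        rw [hphi α, hphi ρ, ← Finset.sum_sub_distrib]
        calc |∑ T ∈ A₀.powerset,
              (α^T.card * (1-α)^(ℓ₀ - T.card) * f (cfgOf T)
                - ρ^T.card * (1-ρ)^(ℓ₀ - T.card) * f (cfgOf T))|
            ≤ ∑ T ∈ A₀.powerset,
              |α^T.card * (1-α)^(ℓ₀ - T.card) - ρ^T.card * (1-ρ)^(ℓ₀ - T.card)|
                * |f (cfgOf T)| := by
              refine (Finset.abs_sum_le_sum_abs _ _).trans (le_of_eq ?_)
              refine Finset.sum_congr rfl fun T hT => ?_
              rw [← abs_mul]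
              congr 1
              ring
          _ ≤ ∑ T ∈ A₀.powerset, ((ℓ₀:ℝ) * |α - ρ|) * |f (cfgOf T)| := by
              refine Finset.sum_le_sum fun T hT => ?_
              have hk : T.card ≤ ℓ₀ := by
                rw [← hA₀card]
                exact Finset.card_le_card (Finset.mem_powerset.mp hT)
              exact mul_le_mul_of_nonneg_right
                (bern_lipschitz α ρ ⟨hα0, hα1⟩ ⟨hρ0.le, hρ1.le⟩ T.card ℓ₀ hk)
                (abs_nonneg _)
          _ = L * |α - ρ| := by
              rw [← Finset.mul_sum, ← hCfdef, hLdef]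
              ring
      have hgabs : |g m| ≤ L * |α - ρ| + K/ℓ := by
        have hdecomp : g m = (g m - phi A₀ f α) + (phi A₀ f α - phi A₀ f ρ) + phi A₀ f ρ := by
          ring
        have habs : |g m| ≤ |g m - phi A₀ f α| + |phi A₀ f α - phi A₀ f ρ| + |phi A₀ f ρ| := by
          calc |g m| = |(g m - phi A₀ f α) + (phi A₀ f α - phi A₀ f ρ) + phi A₀ f ρ| := by
                rw [← hdecomp]
            _ ≤ |(g m - phi A₀ f α) + (phi A₀ f α - phi A₀ f ρ)| + |phi A₀ f ρ| := abs_add_le _ _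
            _ ≤ |g m - phi A₀ f α| + |phi A₀ f α - phi A₀ f ρ| + |phi A₀ f ρ| := by
                linarith [abs_add_le (g m - phi A₀ f α) (phi A₀ f α - phi A₀ f ρ)]
        have hz : |phi A₀ f ρ| = 0 := by rw [hφ, abs_zero]
        linarith
      have hsq := sq_bound (mul_nonneg hL0 (abs_nonneg (α - ρ)))
        (div_nonneg hK0 hℓR.le) hgabs
      have he : (L * |α - ρ|)^2 = L^2 * (α - ρ)^2 := by rw [mul_pow, sq_abs]
      calc (g m)^2 ≤ 2*(L * |α - ρ|)^2 + 2*(K/ℓ)^2 := hsq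
        _ = 2*L^2*(α - ρ)^2 + 2*(K/ℓ)^2 := by rw [he]; ring
    have hsum2 : ∑ m ∈ range (ℓ+1), w m * (g m)^2
        ≤ 2*L^2*(ρ*(1-ρ)/ℓ) + 2*(K/ℓ)^2 := by
      calc ∑ m ∈ range (ℓ+1), w m * (g m)^2
          ≤ ∑ m ∈ range (ℓ+1), w m * (2*L^2*((m:ℝ)/ℓ - ρ)^2 + 2*(K/ℓ)^2) :=
            Finset.sum_le_sum fun m hm => mul_le_mul_of_nonneg_left (hgb m hm) (hwnn m)
        _ = 2*L^2 * (∑ m ∈ range (ℓ+1), w m * ((m:ℝ)/ℓ - ρ)^2)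
            + (2*(K/ℓ)^2) * (∑ m ∈ range (ℓ+1), w m) := by
            rw [Finset.mul_sum, Finset.mul_sum, ← Finset.sum_add_distrib]
            exact Finset.sum_congr rfl fun m _ => by ring
        _ = 2*L^2*(ρ*(1-ρ)/ℓ) + 2*(K/ℓ)^2 := by
            rw [hwsum, hvar_id, mul_one]
    have hfinal : 2*L^2*(ρ*(1-ρ)/ℓ) + 2*(K/ℓ)^2
        ≤ (2*L^2 + 2*K^2 + 8*Cf^2*(ℓ₀:ℝ))/ℓ := by
      have hℓ1R : (1:ℝ) ≤ (ℓ:ℝ) := by exact_mod_cast hℓpos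
      have hρρ : ρ*(1-ρ) ≤ 1 := by nlinarith
      have h1 : 2*L^2*(ρ*(1-ρ)/ℓ) ≤ 2*L^2/ℓ := by
        rw [mul_div_assoc']
        refine div_le_div₀ (by positivity) ?_ hℓR le_rfl
        nlinarith [sq_nonneg L, mul_le_mul_of_nonneg_left hρρ
          (by positivity : (0:ℝ) ≤ 2*L^2)]
      have h2 : 2*(K/ℓ)^2 ≤ 2*K^2/ℓ := by
        calc 2*(K/ℓ)^2 = (2*K^2/ℓ) * (1/ℓ) := by ring
          _ ≤ (2*K^2/ℓ) * 1 :=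
              mul_le_mul_of_nonneg_left (by rw [div_le_one hℓR]; exact hℓ1R) (by positivity)
          _ = 2*K^2/ℓ := mul_one _
      have h3 : (0:ℝ) ≤ 8*Cf^2*(ℓ₀:ℝ)/ℓ := by positivity
      have hsplit : (2*L^2+2*K^2+8*Cf^2*(ℓ₀:ℝ))/(ℓ:ℝ)
          = 2*L^2/ℓ + 2*K^2/ℓ + 8*Cf^2*(ℓ₀:ℝ)/ℓ := by ring
      rw [hsplit]
      linarith
    exact hsum_sq.trans (hsum2.trans hfinal)
  · -- small ℓ
    push_neg at hbig
    have hℓle : (ℓ:ℝ) ≤ 2*(ℓ₀:ℝ) := by exact_mod_cast hbig.le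
    have habs_f : ∀ T ∈ A₀.powerset, |f (cfgOf T)| ≤ Cf := by
      intro T hT
      rw [hCfdef]
      exact Finset.single_le_sum (fun T' _ => abs_nonneg (f (cfgOf T'))) hT
    have hgb : ∀ m ∈ range (ℓ+1), |g m| ≤ Cf := by
      intro m hmr
      have hm : m ≤ ℓ := by
        have := mem_range.mp hmr; omega
      have hgm : g m = ∑ T ∈ A₀.powerset,
          (if T.card ≤ m then ((ℓ-ℓ₀).choose (m-T.card):ℝ) else 0)/(ℓ.choose m:ℝ)
            * f (cfgOf T) :=
        condAvg_formula ℓ₀ ℓ m hℓ hm f hf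
      have hq : ∀ T ∈ A₀.powerset,
          |(if T.card ≤ m then ((ℓ-ℓ₀).choose (m-T.card):ℝ) else 0)/(ℓ.choose m:ℝ)| ≤ 1 := by
        intro T hT
        have hk : T.card ≤ ℓ₀ := by
          rw [← hA₀card]
          exact Finset.card_le_card (Finset.mem_powerset.mp hT)
        have hC : (0:ℝ) < (ℓ.choose m : ℝ) := by exact_mod_cast Nat.choose_pos hm
        have hnum : (0:ℝ) ≤ (if T.card ≤ m then ((ℓ-ℓ₀).choose (m-T.card):ℝ) else 0) := by
          split <;> positivity
        rw [abs_of_nonneg (div_nonneg hnum hC.le), div_le_one hC]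
        split
        · next htm =>
          have hnat : (ℓ-ℓ₀).choose (m-T.card) ≤ ℓ.choose m := by
            set k := T.card
            calc (ℓ-ℓ₀).choose (m-k) ≤ (ℓ-k).choose (m-k) :=
                  Nat.choose_le_choose _ (by omega)
              _ = (ℓ-k).choose ((ℓ-k)-(m-k)) := (Nat.choose_symm (by omega)).symm
              _ = (ℓ-k).choose (ℓ-m) := by congr 1; omega
              _ ≤ ℓ.choose (ℓ-m) := Nat.choose_le_choose _ (by omega)
              _ = ℓ.choose m := Nat.choose_symm hm
          exact_mod_cast hnat
        · exact hC.le
      rw [hgm]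
      calc |∑ T ∈ A₀.powerset,
            (if T.card ≤ m then ((ℓ-ℓ₀).choose (m-T.card):ℝ) else 0)/(ℓ.choose m:ℝ)
              * f (cfgOf T)|
          ≤ ∑ T ∈ A₀.powerset,
            |(if T.card ≤ m then ((ℓ-ℓ₀).choose (m-T.card):ℝ) else 0)/(ℓ.choose m:ℝ)|
              * |f (cfgOf T)| := by
            refine (Finset.abs_sum_le_sum_abs _ _).trans (le_of_eq ?_)
            exact Finset.sum_congr rfl fun T hT => abs_mul _ _
        _ ≤ ∑ T ∈ A₀.powerset, 1 * |f (cfgOf T)| := by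
            refine Finset.sum_le_sum fun T hT => ?_
            exact mul_le_mul_of_nonneg_right (hq T hT) (abs_nonneg _)
        _ = Cf := by
            rw [hCfdef]
            exact Finset.sum_congr rfl fun T _ => one_mul _
    have hab : |a| ≤ Cf := by
      rw [hadef]
      calc |∑ m ∈ range (ℓ+1), w m * g m|
          ≤ ∑ m ∈ range (ℓ+1), |w m * g m| := Finset.abs_sum_le_sum_abs _ _
        _ ≤ ∑ m ∈ range (ℓ+1), w m * Cf := by
            refine Finset.sum_le_sum fun m hm => ?_
            rw [abs_mul, abs_of_nonneg (hwnn m)]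
            exact mul_le_mul_of_nonneg_left (hgb m hm) (hwnn m)
        _ = Cf := by rw [← Finset.sum_mul, hwsum, one_mul]
    have hV : Var μ (psiFun ℓ f) ≤ 4*Cf^2 := by
      rw [hVar]
      calc ∑ m ∈ range (ℓ+1), w m * (g m - a)^2
          ≤ ∑ m ∈ range (ℓ+1), w m * (4*Cf^2) := by
            refine Finset.sum_le_sum fun m hm => ?_
            refine mul_le_mul_of_nonneg_left ?_ (hwnn m)
            have h1 := abs_le.mp (hgb m hm)
            have h2 := abs_le.mp hab
            nlinarith [sq_nonneg (g m + a)]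
        _ = 4*Cf^2 := by rw [← Finset.sum_mul, hwsum, one_mul]
    refine hV.trans ?_
    rw [le_div_iff₀ hℓR]
    nlinarith [sq_nonneg L, sq_nonneg K, sq_nonneg Cf,
      mul_le_mul_of_nonneg_left hℓle (by positivity : (0:ℝ) ≤ 4*Cf^2)]
end
end

section
/- Variance bound for the conditioned function, second order (Proposition 3.2 ii). Let ℓ₀ ∈ ℕ, let f : {0,1}^ℤ → ℝ be a local function with supp(f) ⊆ {1,…,ℓ₀}, and fix ρ ∈ (0,1) with φ_f(ρ) = 0 and φ_f'(ρ) = 0. Then there exists a constant c = c(f,ρ) such that Var(ψ_f(ℓ); ν_ρ) ≤ c/ℓ² for every ℓ ≥ ℓ₀. -/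
/-!
Conditionally on `m` particles in `{1, …, ℓ}`, the configuration on `{1, …, ℓ₀}` is hypergeometric,
and each of its pattern probabilities is within `O(ℓ₀² / ℓ)` of the Bernoulli product probability of
density `m / ℓ`. Hence `ψ_f(ℓ; m) = φ_f(m / ℓ) + O(1 / ℓ)`. Since `φ_f` has a double root at `ρ`,
`|φ_f(x)| ≤ M (x - ρ)²` on `[0, 1]`, so `ψ_f(ℓ)² ≲ (N / ℓ - ρ)⁴ + ℓ⁻²` with `N` the particle number.
Under `ν_ρ`, `N` is binomial and its fourth central moment is at most `3 ℓ²`.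
-/

open MeasureTheory Finset

noncomputable section

section BernoulliWeight

variable {α : Type*} [DecidableEq α] {ρ : ℝ} {B : Finset α}

/-- The `ν_ρ`-probability that the configuration restricted to `B` is the indicator of `S`. -/
def bernoulliWeight (ρ : ℝ) (B S : Finset α) : ℝ := ∏ x ∈ B, if x ∈ S then ρ else 1 - ρ

lemma bernoulliWeight_nonneg (h0 : 0 ≤ ρ) (h1 : ρ ≤ 1) (S : Finset α) :
    0 ≤ bernoulliWeight ρ B S :=
  prod_nonneg fun x _ => by split_ifs <;> linarith

lemma sum_powerset_insert_bernoulliWeight {a : α} (ha : a ∉ B) (g : Finset α → ℝ) :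
    ∑ S ∈ (insert a B).powerset, bernoulliWeight ρ (insert a B) S * g S
      = ∑ S ∈ B.powerset, bernoulliWeight ρ B S * (ρ * g (insert a S) + (1 - ρ) * g S) := by
  have weight_eq : ∀ S ∈ B.powerset, ∀ T, T ⊆ insert a S → S ⊆ T →
      bernoulliWeight ρ (insert a B) T
        = (if a ∈ T then ρ else 1 - ρ) * bernoulliWeight ρ B S := by
    intro S hS T hT hST
    rw [bernoulliWeight, prod_insert ha, bernoulliWeight]
    congr 1
    refine prod_congr rfl fun x hx => ?_
    have hxa : x ≠ a := fun h => ha (h ▸ hx)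
    simp only [show x ∈ T ↔ x ∈ S from
      ⟨fun h => (mem_insert.mp (hT h)).resolve_left hxa, fun h => hST h⟩]
  have haS : ∀ S ∈ B.powerset, a ∉ S := fun S hS h => ha (mem_powerset.mp hS h)
  rw [sum_powerset_insert ha, ← sum_add_distrib]
  refine sum_congr rfl fun S hS => ?_
  rw [weight_eq S hS S (subset_insert a S) subset_rfl, if_neg (haS S hS),
    weight_eq S hS (insert a S) subset_rfl (subset_insert a S), if_pos (mem_insert_self a S)]
  ring

lemma sum_bernoulliWeight : ∑ S ∈ B.powerset, bernoulliWeight ρ B S = 1 := by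
  induction B using Finset.induction_on with
  | empty => simp [bernoulliWeight]
  | insert a B ha ih =>
    simpa [ih, ← sum_mul] using sum_powerset_insert_bernoulliWeight (ρ := ρ) ha (fun _ => 1)

def centralMoment (ρ : ℝ) (B : Finset α) (j : ℕ) : ℝ :=
  ∑ S ∈ B.powerset, bernoulliWeight ρ B S * ((S.card : ℝ) - B.card * ρ) ^ j

lemma centralMoment_insert {a : α} (ha : a ∉ B) (j : ℕ) :
    centralMoment ρ (insert a B) j
      = ∑ S ∈ B.powerset, bernoulliWeight ρ B S *
          (ρ * ((S.card : ℝ) - B.card * ρ + (1 - ρ)) ^ j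
            + (1 - ρ) * ((S.card : ℝ) - B.card * ρ - ρ) ^ j) := by
  rw [centralMoment, sum_powerset_insert_bernoulliWeight ha, card_insert_of_notMem ha]
  refine sum_congr rfl fun S hS => ?_
  have haS : a ∉ S := fun h => ha (mem_powerset.mp hS h)
  rw [card_insert_of_notMem haS]
  push_cast
  ring

lemma centralMoment_zero (B : Finset α) : centralMoment ρ B 0 = 1 := by
  simpa [centralMoment] using sum_bernoulliWeight

lemma centralMoment_one (B : Finset α) : centralMoment ρ B 1 = 0 := by
  induction B using Finset.induction_on with
  | empty => simp [centralMoment, bernoulliWeight]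
  | insert a B ha ih =>
    rw [centralMoment_insert ha, ← ih, centralMoment]
    exact sum_congr rfl fun S _ => by ring

lemma centralMoment_two (B : Finset α) : centralMoment ρ B 2 = B.card * (ρ * (1 - ρ)) := by
  induction B using Finset.induction_on with
  | empty => simp [centralMoment, bernoulliWeight]
  | insert a B ha ih =>
    have expand : centralMoment ρ (insert a B) 2
        = centralMoment ρ B 2 + ρ * (1 - ρ) * centralMoment ρ B 0 := by
      rw [centralMoment_insert ha]
      simp only [centralMoment, mul_sum, ← sum_add_distrib]
      exact sum_congr rfl fun S _ => by ring
    rw [expand, ih, centralMoment_zero, card_insert_of_notMem ha]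
    push_cast
    ring

lemma centralMoment_four_le (h0 : 0 ≤ ρ) (h1 : ρ ≤ 1) (B : Finset α) :
    centralMoment ρ B 4 ≤ 3 * (B.card : ℝ) ^ 2 := by
  induction B using Finset.induction_on with
  | empty => simp [centralMoment, bernoulliWeight]
  | insert a B ha ih =>
    have expand : centralMoment ρ (insert a B) 4
        = centralMoment ρ B 4 + 6 * (ρ * (1 - ρ)) * centralMoment ρ B 2
          + 4 * (ρ * (1 - ρ)) * (1 - 2 * ρ) * centralMoment ρ B 1
          + (ρ * (1 - ρ) ^ 4 + (1 - ρ) * ρ ^ 4) * centralMoment ρ B 0 := by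
      rw [centralMoment_insert ha]
      simp only [centralMoment, mul_sum, ← sum_add_distrib]
      exact sum_congr rfl fun S _ => by ring
    have hv : 0 ≤ ρ * (1 - ρ) ∧ ρ * (1 - ρ) ≤ 1 := ⟨by nlinarith, by nlinarith⟩
    have hc : ρ * (1 - ρ) ^ 4 + (1 - ρ) * ρ ^ 4 ≤ 1 := by
      nlinarith [pow_le_one₀ (n := 4) (sub_nonneg.mpr h1) (by linarith), pow_le_one₀ (n := 4) h0 h1]
    have hn : (0 : ℝ) ≤ B.card := B.card.cast_nonneg
    rw [expand, centralMoment_two, centralMoment_one, centralMoment_zero, card_insert_of_notMem ha]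
    push_cast
    nlinarith [mul_le_mul hv.2 hv.2 hv.1 zero_le_one, mul_nonneg hn hv.1]

lemma sum_bernoulliWeight_mul_fourth_add_le (h0 : 0 ≤ ρ) (h1 : ρ ≤ 1) {A : ℝ} (hA : 0 ≤ A)
    (C : ℝ) :
    ∑ S ∈ B.powerset, bernoulliWeight ρ B S * (A * ((S.card : ℝ) - B.card * ρ) ^ 4 + C)
      ≤ 3 * A * (B.card : ℝ) ^ 2 + C := by
  have expand : ∑ S ∈ B.powerset, bernoulliWeight ρ B S * (A * ((S.card : ℝ) - B.card * ρ) ^ 4 + C)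
      = A * centralMoment ρ B 4 + C * centralMoment ρ B 0 := by
    rw [centralMoment, centralMoment, mul_sum, mul_sum, ← sum_add_distrib]
    exact sum_congr rfl fun S _ => by ring
  rw [expand, centralMoment_zero]
  nlinarith [mul_le_mul_of_nonneg_left (centralMoment_four_le h0 h1 B) hA]

end BernoulliWeight

def cylinderOn (B S : Finset ℤ) : Set Cfg := {η | ∀ x ∈ B, η x = cfgOf S x}

lemma measurableSet_cylinderOn (B S : Finset ℤ) : MeasurableSet (cylinderOn B S) := by
  have : cylinderOn B S = ⋂ x ∈ (B : Set ℤ), (fun η : Cfg => η x) ⁻¹' {cfgOf S x} := by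
    ext η; simp [cylinderOn]
  rw [this]
  exact .biInter B.countable_toSet fun x _ => measurable_pi_apply x (measurableSet_singleton _)

lemma mem_cylinderOn_iff {B S : Finset ℤ} (hS : S ⊆ B) (η : Cfg) :
    η ∈ cylinderOn B S ↔ S = B.filter (η · = true) := by
  constructor
  · intro h
    ext x
    by_cases hx : x ∈ B
    · simp [h x hx, cfgOf, hx]
    · simp only [mem_filter, hx, false_and, iff_false]
      exact fun h => hx (hS h)
  · rintro rfl x hx
    cases hη : η x <;> simp [cfgOf, hη, hx]

lemma LocalOn.eq_sum_indicator {B : Finset ℤ} {g : Cfg → ℝ} (hg : LocalOn B g) :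
    g = fun η => ∑ S ∈ B.powerset, (cylinderOn B S).indicator (fun _ => g (cfgOf S)) η := by
  funext η
  have htrace : B.filter (η · = true) ∈ B.powerset := mem_powerset.mpr (filter_subset _ _)
  rw [sum_eq_single_of_mem _ htrace]
  · have hη : η ∈ cylinderOn B (B.filter (η · = true)) :=
      (mem_cylinderOn_iff (filter_subset _ _) η).mpr rfl
    rw [Set.indicator_of_mem hη]
    exact hg _ _ hη
  · intro S hS hne
    exact Set.indicator_of_notMem
      (fun h => hne ((mem_cylinderOn_iff (mem_powerset.mp hS) η).mp h)) _

lemma integral_eq_sum_of_localOn {ρ : ℝ} {μ : Measure Cfg} (hμ : IsBernoulliProduct ρ μ)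
    {B : Finset ℤ} {g : Cfg → ℝ} (hg : LocalOn B g) :
    ∫ η, g η ∂μ = ∑ S ∈ B.powerset, bernoulliWeight ρ B S * g (cfgOf S) := by
  have := hμ.1
  rw [integral_congr_ae (.of_forall (congrFun hg.eq_sum_indicator)), integral_finsetSum]
  · refine sum_congr rfl fun S _ => ?_
    rw [integral_indicator_const _ (measurableSet_cylinderOn B S), measureReal_def, cylinderOn,
      hμ.2, smul_eq_mul]
    simp [bernoulliWeight, cfgOf]
  · exact fun S _ => (integrable_const _).indicator (measurableSet_cylinderOn B S)

lemma Var_eq_sum_of_localOn {ρ : ℝ} {μ : Measure Cfg} (hμ : IsBernoulliProduct ρ μ)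
    {B : Finset ℤ} {g : Cfg → ℝ} (hg : LocalOn B g) :
    Var μ g = ∑ S ∈ B.powerset, bernoulliWeight ρ B S *
      (g (cfgOf S) - ∑ T ∈ B.powerset, bernoulliWeight ρ B T * g (cfgOf T)) ^ 2 := by
  rw [Var, integral_eq_sum_of_localOn hμ hg]
  exact integral_eq_sum_of_localOn hμ fun η ξ h => by rw [hg η ξ h]

lemma Var_le_sum_sq_of_localOn {ρ : ℝ} {μ : Measure Cfg} (hμ : IsBernoulliProduct ρ μ)
    {B : Finset ℤ} {g : Cfg → ℝ} (hg : LocalOn B g) :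
    Var μ g ≤ ∑ S ∈ B.powerset, bernoulliWeight ρ B S * g (cfgOf S) ^ 2 := by
  rw [Var_eq_sum_of_localOn hμ hg]
  generalize ha : ∑ T ∈ B.powerset, bernoulliWeight ρ B T * g (cfgOf T) = a
  have expand : ∑ S ∈ B.powerset, bernoulliWeight ρ B S * (g (cfgOf S) - a) ^ 2
      = ∑ S ∈ B.powerset, bernoulliWeight ρ B S * g (cfgOf S) ^ 2
        - 2 * a * ∑ S ∈ B.powerset, bernoulliWeight ρ B S * g (cfgOf S)
        + a ^ 2 * ∑ S ∈ B.powerset, bernoulliWeight ρ B S := by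
    rw [mul_sum, mul_sum, ← sum_sub_distrib, ← sum_add_distrib]
    exact sum_congr rfl fun S _ => by ring
  rw [expand, ha, sum_bernoulliWeight]
  nlinarith [sq_nonneg a]

lemma numOnes_cfgOf {ℓ : ℕ} {S : Finset ℤ} (hS : S ⊆ Icc 1 (ℓ : ℤ)) :
    numOnes ℓ (cfgOf S) = S.card := by
  calc numOnes ℓ (cfgOf S) = #{x ∈ Icc 1 (ℓ : ℤ) | x ∈ S} := by
        rw [numOnes, card_filter]
        exact sum_congr rfl fun x _ => by by_cases hx : x ∈ S <;> simp [cfgOf, hx]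
    _ = S.card := by rw [filter_mem_eq_inter, inter_eq_right.mpr hS]

lemma localOn_psiFun (ℓ : ℕ) (f : Cfg → ℝ) : LocalOn (Icc 1 (ℓ : ℤ)) (psiFun ℓ f) := by
  intro η ξ h
  simp only [psiFun, numOnes]
  rw [sum_congr rfl fun x hx => by rw [h x hx]]

lemma Var_psiFun_le {ρ : ℝ} {μ : Measure Cfg} (hμ : IsBernoulliProduct ρ μ) (ℓ : ℕ)
    (f : Cfg → ℝ) :
    Var μ (psiFun ℓ f) ≤ ∑ S ∈ (Icc 1 (ℓ : ℤ)).powerset,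
      bernoulliWeight ρ (Icc 1 (ℓ : ℤ)) S * condAvg ℓ S.card f ^ 2 := by
  refine (Var_le_sum_sq_of_localOn hμ (localOn_psiFun ℓ f)).trans_eq (sum_congr rfl fun S hS => ?_)
  rw [psiFun, numOnes_cfgOf (mem_powerset.mp hS)]

lemma Var_psiFun_zero {ρ : ℝ} {μ : Measure Cfg} (hμ : IsBernoulliProduct ρ μ) (f : Cfg → ℝ) :
    Var μ (psiFun 0 f) = 0 := by
  rw [Var_eq_sum_of_localOn hμ (localOn_psiFun 0 f), show Icc (1 : ℤ) (0 : ℕ) = ∅ by rfl]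
  simp [bernoulliWeight]

section Counting

variable {α : Type*} [DecidableEq α] {A B T : Finset α} {m : ℕ}

lemma card_filter_powersetCard_inter_eq (hAB : A ⊆ B) (hTA : T ⊆ A) (hm : T.card ≤ m) :
    #{S ∈ powersetCard m B | S ∩ A = T} = (B.card - A.card).choose (m - T.card) := by
  rw [← card_sdiff_of_subset hAB, ← card_powersetCard]
  refine card_bij' (fun S _ => S \ A) (fun U _ => U ∪ T) ?_ ?_ ?_ ?_
  · intro S hS
    obtain ⟨hS', rfl⟩ := mem_filter.mp hS
    obtain ⟨hSB, hSm⟩ := mem_powersetCard.mp hS'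
    refine mem_powersetCard.mpr ⟨sdiff_subset_sdiff hSB subset_rfl, ?_⟩
    have := card_sdiff_add_card_inter S A
    omega
  · intro U hU
    obtain ⟨hUBA, hUm⟩ := mem_powersetCard.mp hU
    have hUA : Disjoint U A := disjoint_of_subset_left hUBA sdiff_disjoint
    refine mem_filter.mpr ⟨mem_powersetCard.mpr ⟨?_, ?_⟩, ?_⟩
    · exact union_subset (hUBA.trans sdiff_subset) (hTA.trans hAB)
    · rw [card_union_of_disjoint (disjoint_of_subset_right hTA hUA)]
      omega
    · rw [union_inter_distrib_right, inter_eq_left.mpr hTA,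
        disjoint_iff_inter_eq_empty.mp hUA, empty_union]
  · intro S hS
    rw [← (mem_filter.mp hS).2, sdiff_union_inter]
  · intro U hU
    have hUA : Disjoint U A := disjoint_of_subset_left (mem_powersetCard.mp hU).1 sdiff_disjoint
    rw [union_sdiff_distrib, sdiff_eq_self_of_disjoint hUA, sdiff_eq_empty_iff_subset.mpr hTA,
      union_empty]

lemma filter_powersetCard_inter_eq_eq_empty (hm : m < T.card) :
    {S ∈ powersetCard m B | S ∩ A = T} = ∅ := by
  refine filter_eq_empty_iff.mpr fun S hS hST => ?_
  have := card_le_card (hST ▸ inter_subset_left : T ⊆ S)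
  rw [(mem_powersetCard.mp hS).2] at this
  omega

end Counting

lemma condAvg_eq_sum {ℓ₀ : ℕ} {f : Cfg → ℝ} (hf : LocalOn (Icc 1 (ℓ₀ : ℤ)) f) (ℓ m : ℕ) :
    condAvg ℓ m f = ∑ T ∈ (Icc 1 (ℓ₀ : ℤ)).powerset,
      (#{S ∈ powersetCard m (Icc 1 (ℓ : ℤ)) | S ∩ Icc 1 (ℓ₀ : ℤ) = T} / ℓ.choose m : ℝ)
        * f (cfgOf T) := by
  have restrict : ∀ S : Finset ℤ, f (cfgOf S) = f (cfgOf (S ∩ Icc 1 (ℓ₀ : ℤ))) :=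
    fun S => hf _ _ fun x hx => by simp [cfgOf, hx]
  rw [condAvg, ← powersetCard_eq_filter, sum_div, sum_congr rfl fun S _ => by rw [restrict S],
    ← sum_fiberwise_of_maps_to (g := (· ∩ Icc 1 (ℓ₀ : ℤ))) (t := (Icc 1 (ℓ₀ : ℤ)).powerset)
      fun S _ => mem_powerset.mpr inter_subset_right]
  refine sum_congr rfl fun T _ => ?_
  rw [sum_congr rfl fun S hS => by rw [(mem_filter.mp hS).2], sum_const, nsmul_eq_mul]
  ring

lemma choose_mul_descFactorial_eq {ℓ₀ ℓ m k : ℕ} (hk : k ≤ ℓ₀) (hkm : k ≤ m) (hℓ₀ : ℓ₀ ≤ ℓ)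
    (hm : m ≤ ℓ) :
    (ℓ - ℓ₀).choose (m - k) * ℓ.descFactorial ℓ₀
      = ℓ.choose m * (m.descFactorial k * (ℓ - m).descFactorial (ℓ₀ - k)) := by
  by_cases h : m - k ≤ ℓ - ℓ₀
  · have hpos : 0 < (m - k).factorial * (ℓ - m - (ℓ₀ - k)).factorial := by positivity
    refine Nat.eq_of_mul_eq_mul_right hpos ?_
    calc (ℓ - ℓ₀).choose (m - k) * ℓ.descFactorial ℓ₀
            * ((m - k).factorial * (ℓ - m - (ℓ₀ - k)).factorial)
          = (ℓ - ℓ₀).choose (m - k) * (m - k).factorial * (ℓ - ℓ₀ - (m - k)).factorial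
            * ℓ.descFactorial ℓ₀ := by
            rw [show ℓ - ℓ₀ - (m - k) = ℓ - m - (ℓ₀ - k) by omega]; ring
      _ = ℓ.factorial := by
            rw [Nat.choose_mul_factorial_mul_factorial h, Nat.factorial_mul_descFactorial hℓ₀]
      _ = ℓ.choose m * ((m - k).factorial * m.descFactorial k)
            * ((ℓ - m - (ℓ₀ - k)).factorial * (ℓ - m).descFactorial (ℓ₀ - k)) := by
            rw [Nat.factorial_mul_descFactorial hkm, Nat.factorial_mul_descFactorial (by omega),
              Nat.choose_mul_factorial_mul_factorial hm]
      _ = _ := by ring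
  · rw [Nat.choose_eq_zero_of_lt (by omega),
      (Nat.descFactorial_eq_zero_iff_lt.mpr (by omega) : (ℓ - m).descFactorial (ℓ₀ - k) = 0)]
    simp

/-- Drawing the sites `0, …, ℓ₀ - 1` of a window of `ℓ` sites without replacement, among which `m`
are occupied, with the first `k` draws occupied and the others empty: the number of favourable
sites left at draw `j`. -/
def favourableLeft (ℓ m k j : ℕ) : ℕ := if j < k then m - j else ℓ - m - (j - k)

lemma prod_favourableLeft {ℓ₀ k : ℕ} (hk : k ≤ ℓ₀) (ℓ m : ℕ) :
    ∏ j ∈ range ℓ₀, favourableLeft ℓ m k j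
      = m.descFactorial k * (ℓ - m).descFactorial (ℓ₀ - k) := by
  rw [← Nat.add_sub_cancel' hk, prod_range_add, Nat.add_sub_cancel_left,
    Nat.descFactorial_eq_prod_range, Nat.descFactorial_eq_prod_range]
  congr 1
  · exact prod_congr rfl fun j hj => if_pos (mem_range.mp hj)
  · exact prod_congr rfl fun i _ => by simp [favourableLeft]

lemma choose_div_choose_eq_prod {ℓ₀ ℓ m k : ℕ} (hk : k ≤ ℓ₀) (hkm : k ≤ m) (hℓ₀ : ℓ₀ ≤ ℓ)
    (hm : m ≤ ℓ) :
    ((ℓ - ℓ₀).choose (m - k) / ℓ.choose m : ℝ)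
      = ∏ j ∈ range ℓ₀, (favourableLeft ℓ m k j / ((ℓ : ℝ) - j)) := by
  have hden : ∏ j ∈ range ℓ₀, ((ℓ : ℝ) - j) = ℓ.descFactorial ℓ₀ := by
    rw [Nat.descFactorial_eq_prod_range, Nat.cast_prod]
    exact prod_congr rfl fun j hj => by rw [Nat.cast_sub (by have := mem_range.mp hj; omega)]
  have hchoose : (ℓ.choose m : ℝ) ≠ 0 := Nat.cast_ne_zero.mpr (Nat.choose_pos hm).ne'
  have hdesc : (ℓ.descFactorial ℓ₀ : ℝ) ≠ 0 :=
    Nat.cast_ne_zero.mpr fun h => by have := Nat.descFactorial_eq_zero_iff_lt.mp h; omega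
  rw [prod_div_distrib, hden, ← Nat.cast_prod, prod_favourableLeft hk, div_eq_div_iff hchoose hdesc]
  exact_mod_cast (choose_mul_descFactorial_eq hk hkm hℓ₀ hm).trans (mul_comm _ _)

lemma abs_prod_sub_prod_le_sum {ι : Type*} (s : Finset ι) {a b : ι → ℝ}
    (ha : ∀ i ∈ s, a i ∈ Set.Icc 0 1) (hb : ∀ i ∈ s, b i ∈ Set.Icc 0 1) :
    |∏ i ∈ s, a i - ∏ i ∈ s, b i| ≤ ∑ i ∈ s, |a i - b i| := by
  classical
  induction s using Finset.induction_on with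
  | empty => simp
  | insert i s hi ih =>
    rw [prod_insert hi, prod_insert hi, sum_insert hi]
    have ha' := ha i (mem_insert_self i s)
    have hprod : |∏ i ∈ s, b i| ≤ 1 := by
      rw [abs_prod]
      exact prod_le_one (fun _ _ => abs_nonneg _) fun j hj => by
        rw [abs_of_nonneg (hb j (mem_insert_of_mem hj)).1]; exact (hb j (mem_insert_of_mem hj)).2
    have ih' := ih (fun j hj => ha j (mem_insert_of_mem hj))
      (fun j hj => hb j (mem_insert_of_mem hj))
    calc |a i * ∏ i ∈ s, a i - b i * ∏ i ∈ s, b i|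
        = |a i * (∏ i ∈ s, a i - ∏ i ∈ s, b i) + (a i - b i) * ∏ i ∈ s, b i| := by ring_nf
      _ ≤ |a i| * |∏ i ∈ s, a i - ∏ i ∈ s, b i| + |a i - b i| * |∏ i ∈ s, b i| := by
        rw [← abs_mul, ← abs_mul]; exact abs_add_le _ _
      _ ≤ 1 * ∑ i ∈ s, |a i - b i| + |a i - b i| * 1 := by
        gcongr
        · rw [abs_of_nonneg ha'.1]; exact ha'.2
      _ = |a i - b i| + ∑ i ∈ s, |a i - b i| := by ring

lemma abs_div_sub_div_le {r c L j : ℝ} (hc : 0 ≤ c) (hcL : c ≤ L) (hrc : |r - c| ≤ j)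
    (hj : 2 * j ≤ L) (hL : 0 < L) :
    |r / (L - j) - c / L| ≤ 4 * j / L := by
  have hj0 : 0 ≤ j := (abs_nonneg _).trans hrc
  have hLj : 0 < L - j := by linarith
  have hnum : |r * L - (L - j) * c| ≤ 2 * j * L := by
    calc |r * L - (L - j) * c| = |(r - c) * L + c * j| := by ring_nf
      _ ≤ |r - c| * L + c * j := (abs_add_le _ _).trans_eq (by
        rw [abs_mul, abs_of_pos hL, abs_of_nonneg (mul_nonneg hc hj0)])
      _ ≤ 2 * j * L := by nlinarith
  rw [div_sub_div _ _ hLj.ne' hL.ne', abs_div, abs_of_pos (mul_pos hLj hL),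
    div_le_div_iff₀ (mul_pos hLj hL) hL]
  nlinarith [mul_le_mul_of_nonneg_right hnum hL.le, mul_nonneg hj0 hL.le]

lemma abs_natCast_sub_sub_le (a b : ℕ) : |((a - b : ℕ) : ℝ) - a| ≤ b := by
  rcases le_total b a with h | h
  · rw [Nat.cast_sub h]; simp
  · rw [Nat.sub_eq_zero_of_le h, Nat.cast_zero, zero_sub, abs_neg, Nat.abs_cast]
    exact_mod_cast h

lemma prod_range_ite_lt (p q : ℝ) {k ℓ₀ : ℕ} (hk : k ≤ ℓ₀) :
    ∏ j ∈ range ℓ₀, (if j < k then p else q) = p ^ k * q ^ (ℓ₀ - k) := by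
  rw [← Nat.add_sub_cancel' hk, prod_range_add, Nat.add_sub_cancel_left,
    prod_congr rfl fun j hj => if_pos (mem_range.mp hj),
    prod_congr rfl fun i _ => if_neg (Nat.not_lt.mpr (Nat.le_add_right k i))]
  simp

lemma abs_favourableLeft_sub_le {ℓ m k : ℕ} (hm : m ≤ ℓ) (j : ℕ) :
    |(favourableLeft ℓ m k j : ℝ) - (if j < k then (m : ℝ) else ℓ - m)| ≤ j := by
  unfold favourableLeft
  split_ifs with h
  · exact abs_natCast_sub_sub_le m j
  · rw [← Nat.cast_sub hm]
    exact (abs_natCast_sub_sub_le _ _).trans (by exact_mod_cast Nat.sub_le j k)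

lemma favourableLeft_div_mem_Icc {ℓ m k j : ℕ} (hkm : k ≤ m) (hm : m ≤ ℓ) (hj : j < ℓ) :
    (favourableLeft ℓ m k j / ((ℓ : ℝ) - j)) ∈ Set.Icc 0 1 := by
  have hden : (0 : ℝ) < ℓ - j := sub_pos.mpr (Nat.cast_lt.mpr hj)
  refine ⟨by positivity, (div_le_one hden).mpr ?_⟩
  rw [← Nat.cast_sub hj.le, Nat.cast_le]
  unfold favourableLeft
  split_ifs <;> omega

lemma abs_favourableLeft_div_sub_le {ℓ₀ ℓ m k j : ℕ} (hm : m ≤ ℓ) (hj : j < ℓ₀)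
    (hℓ : 2 * ℓ₀ ≤ ℓ) :
    |favourableLeft ℓ m k j / ((ℓ : ℝ) - j) - (if j < k then (m / ℓ : ℝ) else 1 - m / ℓ)|
      ≤ 4 * ℓ₀ / ℓ := by
  have hj' : (j : ℝ) < ℓ₀ := Nat.cast_lt.mpr hj
  have hℓ' : (2 * ℓ₀ : ℝ) ≤ ℓ := by exact_mod_cast hℓ
  have hL : (0 : ℝ) < ℓ := by linarith
  have hmL : (m : ℝ) ≤ ℓ := Nat.cast_le.mpr hm
  have hc : (if j < k then (m / ℓ : ℝ) else 1 - m / ℓ)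
      = (if j < k then (m : ℝ) else ℓ - m) / ℓ := by
    split_ifs
    · rfl
    · field_simp
  rw [hc]
  refine (abs_div_sub_div_le ?_ ?_ (abs_favourableLeft_sub_le hm j) (by linarith) hL).trans ?_
  · split_ifs <;> linarith [m.cast_nonneg (α := ℝ)]
  · split_ifs <;> linarith [m.cast_nonneg (α := ℝ)]
  · gcongr

/-- `C(ℓ - ℓ₀, m - k) / C(ℓ, m)` is the probability that `ℓ₀` given sites carry a given pattern with
`k` particles when `m` particles are placed uniformly on `ℓ` sites. -/
lemma abs_choose_div_choose_sub_le {ℓ₀ ℓ m k : ℕ} (hk : k ≤ ℓ₀) (hkm : k ≤ m) (hℓ₀ : ℓ₀ ≤ ℓ)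
    (hm : m ≤ ℓ) (hℓ : 0 < ℓ) :
    |((ℓ - ℓ₀).choose (m - k) / ℓ.choose m : ℝ) - (m / ℓ : ℝ) ^ k * (1 - m / ℓ) ^ (ℓ₀ - k)|
      ≤ 4 * ℓ₀ ^ 2 / ℓ := by
  have hL : (0 : ℝ) < ℓ := Nat.cast_pos.mpr hℓ
  have hp0 : (0 : ℝ) ≤ m / ℓ := by positivity
  have hp1 : (m / ℓ : ℝ) ≤ 1 := (div_le_one hL).mpr (Nat.cast_le.mpr hm)
  have ha : ∀ j ∈ range ℓ₀, (favourableLeft ℓ m k j / ((ℓ : ℝ) - j)) ∈ Set.Icc 0 1 :=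
    fun j hj => favourableLeft_div_mem_Icc hkm hm ((mem_range.mp hj).trans_le hℓ₀)
  have hb : ∀ j ∈ range ℓ₀, (if j < k then (m / ℓ : ℝ) else 1 - m / ℓ) ∈ Set.Icc 0 1 :=
    fun j _ => by split_ifs <;> constructor <;> linarith
  rw [choose_div_choose_eq_prod hk hkm hℓ₀ hm, ← prod_range_ite_lt _ _ hk]
  rcases le_or_gt (2 * ℓ₀) ℓ with hlarge | hsmall
  · calc _ ≤ ∑ j ∈ range ℓ₀, |favourableLeft ℓ m k j / ((ℓ : ℝ) - j)
              - (if j < k then (m / ℓ : ℝ) else 1 - m / ℓ)| := abs_prod_sub_prod_le_sum _ ha hb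
      _ ≤ ∑ _j ∈ range ℓ₀, 4 * (ℓ₀ : ℝ) / ℓ := sum_le_sum fun j hj =>
          abs_favourableLeft_div_sub_le hm (mem_range.mp hj) hlarge
      _ = 4 * ℓ₀ ^ 2 / ℓ := by rw [sum_const, card_range, nsmul_eq_mul]; ring
  -- For `ℓ < 2 ℓ₀` both probabilities lie in `[0, 1]` and `1 ≤ 4 ℓ₀² / ℓ`.
  have hone : (1 : ℝ) ≤ 4 * ℓ₀ ^ 2 / ℓ := by
    rw [le_div_iff₀ hL]
    have : (ℓ : ℝ) < 2 * ℓ₀ := by exact_mod_cast hsmall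
    have : (1 : ℝ) ≤ ℓ₀ := by exact_mod_cast (by omega : 1 ≤ ℓ₀)
    nlinarith
  refine (abs_sub_le_of_nonneg_of_le ?_ ?_ ?_ ?_).trans hone
  · exact prod_nonneg fun j hj => (ha j hj).1
  · exact prod_le_one (fun j hj => (ha j hj).1) fun j hj => (ha j hj).2
  · exact prod_nonneg fun j hj => (hb j hj).1
  · exact prod_le_one (fun j hj => (hb j hj).1) fun j hj => (hb j hj).2

lemma card_Icc_one (n : ℕ) : (Icc (1 : ℤ) n).card = n := by simp

lemma abs_card_filter_div_choose_sub_le {ℓ₀ ℓ m : ℕ} (hℓ₀ : ℓ₀ ≤ ℓ) (hm : m ≤ ℓ) (hℓ : 0 < ℓ)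
    {T : Finset ℤ} (hT : T ⊆ Icc 1 (ℓ₀ : ℤ)) :
    |(#{S ∈ powersetCard m (Icc 1 (ℓ : ℤ)) | S ∩ Icc 1 (ℓ₀ : ℤ) = T} / ℓ.choose m : ℝ)
        - (m / ℓ : ℝ) ^ T.card * (1 - m / ℓ) ^ (ℓ₀ - T.card)| ≤ 4 * ℓ₀ ^ 2 / ℓ := by
  have hk : T.card ≤ ℓ₀ := (card_le_card hT).trans_eq (card_Icc_one ℓ₀)
  by_cases hkm : T.card ≤ m
  · have hsub : Icc (1 : ℤ) ℓ₀ ⊆ Icc 1 ℓ := Icc_subset_Icc_right (Nat.cast_le.mpr hℓ₀)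
    rw [card_filter_powersetCard_inter_eq hsub hT hkm, card_Icc_one, card_Icc_one]
    exact abs_choose_div_choose_sub_le hk hkm hℓ₀ hm hℓ
  -- No `m`-subset contains `T`; the binomial weight is then at most `m / ℓ < ℓ₀ / ℓ`.
  have hL : (0 : ℝ) < ℓ := Nat.cast_pos.mpr hℓ
  have hp0 : (0 : ℝ) ≤ m / ℓ := by positivity
  have hp1 : (m / ℓ : ℝ) ≤ 1 := (div_le_one hL).mpr (Nat.cast_le.mpr hm)
  have hq0 : 0 ≤ 1 - (m / ℓ : ℝ) := by linarith
  rw [filter_powersetCard_inter_eq_eq_empty (by omega), card_empty, Nat.cast_zero, zero_div,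
    zero_sub, abs_neg, abs_of_nonneg (by positivity)]
  calc (m / ℓ : ℝ) ^ T.card * (1 - m / ℓ) ^ (ℓ₀ - T.card)
      ≤ m / ℓ :=
        (mul_le_of_le_one_right (by positivity) (pow_le_one₀ hq0 (by linarith))).trans
          (pow_le_of_le_one hp0 hp1 (by omega))
    _ ≤ 4 * ℓ₀ ^ 2 / ℓ := by
        gcongr
        have : (m : ℝ) + 1 ≤ ℓ₀ := by exact_mod_cast (by omega : m + 1 ≤ ℓ₀)
        nlinarith

lemma abs_condAvg_sub_phi_le {ℓ₀ : ℕ} {f : Cfg → ℝ} (hf : LocalOn (Icc 1 (ℓ₀ : ℤ)) f)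
    {ℓ m : ℕ} (hℓ₀ : ℓ₀ ≤ ℓ) (hm : m ≤ ℓ) (hℓ : 0 < ℓ) :
    |condAvg ℓ m f - phi (Icc 1 (ℓ₀ : ℤ)) f (m / ℓ)|
      ≤ (∑ T ∈ (Icc 1 (ℓ₀ : ℤ)).powerset, |f (cfgOf T)|) * (4 * ℓ₀ ^ 2 / ℓ) := by
  rw [condAvg_eq_sum hf, phi, card_Icc_one, ← sum_sub_distrib, sum_mul]
  refine (abs_sum_le_sum_abs _ _).trans (sum_le_sum fun T hT => ?_)
  rw [← sub_mul, abs_mul, mul_comm]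
  exact mul_le_mul_of_nonneg_left
    (abs_card_filter_div_choose_sub_le hℓ₀ hm hℓ (mem_powerset.mp hT)) (abs_nonneg _)

lemma Polynomial.exists_abs_eval_le_mul_sq_of_isRoot_derivative {P : Polynomial ℝ} {ρ : ℝ}
    (h0 : P.IsRoot ρ) (h1 : (Polynomial.derivative P).IsRoot ρ) (a b : ℝ) :
    ∃ M : ℝ, ∀ x ∈ Set.Icc a b, |P.eval x| ≤ M * (x - ρ) ^ 2 := by
  obtain ⟨Q, rfl⟩ := Polynomial.dvd_iff_isRoot.mpr h0
  have hQ : Q.IsRoot ρ := by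
    simpa [Polynomial.derivative_mul] using h1
  obtain ⟨R, rfl⟩ := Polynomial.dvd_iff_isRoot.mpr hQ
  obtain ⟨M, hM⟩ := isCompact_Icc.exists_bound_of_continuousOn R.continuous.continuousOn
  refine ⟨M, fun x hx => ?_⟩
  have hR : |R.eval x| ≤ M := hM x hx
  have hP : ((Polynomial.X - Polynomial.C ρ) * ((Polynomial.X - Polynomial.C ρ) * R)).eval x
      = (x - ρ) ^ 2 * R.eval x := by
    simp only [Polynomial.eval_mul, Polynomial.eval_sub, Polynomial.eval_X, Polynomial.eval_C]
    ring
  rw [hP, abs_mul, abs_of_nonneg (sq_nonneg _), mul_comm M]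
  exact mul_le_mul_of_nonneg_left hR (sq_nonneg _)

open Polynomial in
def phiPoly (A : Finset ℤ) (f : Cfg → ℝ) : ℝ[X] :=
  ∑ S ∈ A.powerset, X ^ S.card * (1 - X) ^ (A.card - S.card) * C (f (cfgOf S))

lemma eval_phiPoly (A : Finset ℤ) (f : Cfg → ℝ) (β : ℝ) : (phiPoly A f).eval β = phi A f β := by
  simp [phiPoly, phi, Polynomial.eval_finsetSum]

lemma exists_abs_phi_le {A : Finset ℤ} {f : Cfg → ℝ} {ρ : ℝ} (hφ : phi A f ρ = 0)
    (hφ' : deriv (phi A f) ρ = 0) :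
    ∃ M : ℝ, ∀ x ∈ Set.Icc (0 : ℝ) 1, |phi A f x| ≤ M * (x - ρ) ^ 2 := by
  have hfun : phi A f = fun x => (phiPoly A f).eval x := funext fun x => (eval_phiPoly A f x).symm
  rw [hfun, Polynomial.deriv] at hφ'
  rw [hfun] at hφ ⊢
  exact Polynomial.exists_abs_eval_le_mul_sq_of_isRoot_derivative hφ hφ' 0 1

lemma sq_condAvg_le {ℓ₀ : ℕ} {f : Cfg → ℝ} (hf : LocalOn (Icc 1 (ℓ₀ : ℤ)) f) {ρ M : ℝ}
    (hM : ∀ x ∈ Set.Icc (0 : ℝ) 1, |phi (Icc 1 (ℓ₀ : ℤ)) f x| ≤ M * (x - ρ) ^ 2)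
    {ℓ m : ℕ} (hℓ₀ : ℓ₀ ≤ ℓ) (hm : m ≤ ℓ) (hℓ : 0 < ℓ) :
    condAvg ℓ m f ^ 2 ≤ 2 * M ^ 2 / ℓ ^ 4 * ((m : ℝ) - ℓ * ρ) ^ 4
      + 2 * ((∑ T ∈ (Icc 1 (ℓ₀ : ℤ)).powerset, |f (cfgOf T)|) * (4 * ℓ₀ ^ 2)) ^ 2 / ℓ ^ 2 := by
  have hL : (0 : ℝ) < ℓ := Nat.cast_pos.mpr hℓ
  have hclose := abs_condAvg_sub_phi_le hf hℓ₀ hm hℓ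
  have hflat := hM (m / ℓ) ⟨by positivity, (div_le_one hL).mpr (Nat.cast_le.mpr hm)⟩
  set K := (∑ T ∈ (Icc 1 (ℓ₀ : ℤ)).powerset, |f (cfgOf T)|) * (4 * ℓ₀ ^ 2)
  set a := condAvg ℓ m f
  set b := phi (Icc 1 (ℓ₀ : ℤ)) f (m / ℓ)
  have ha : (a - b) ^ 2 ≤ (K / ℓ) ^ 2 :=
    sq_le_sq.mpr (hclose.trans_eq (by ring) |>.trans (le_abs_self _))
  have hb : b ^ 2 ≤ (M * (m / ℓ - ρ) ^ 2) ^ 2 := sq_le_sq.mpr (hflat.trans (le_abs_self _))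
  calc a ^ 2 ≤ 2 * b ^ 2 + 2 * (a - b) ^ 2 := by nlinarith [sq_nonneg (a - 2 * b)]
    _ ≤ 2 * (M * (m / ℓ - ρ) ^ 2) ^ 2 + 2 * (K / ℓ) ^ 2 := by gcongr
    _ = _ := by field_simp

/-- **Variance bound for the conditioned function, second order** (Proposition 3.2 ii).
If `f` is local with support in `{1,…,ℓ₀}`, `ρ ∈ (0,1)`, `φ_f(ρ) = 0` and `φ_f'(ρ) = 0`,
then there is a constant `c = c(f,ρ)` such that `Var(ψ_f(ℓ); ν_ρ) ≤ c/ℓ²` for every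
`ℓ ≥ ℓ₀`. -/
theorem variance_psi_second_order
    (ℓ₀ : ℕ) (f : Cfg → ℝ) (hf : LocalOn (Finset.Icc (1 : ℤ) (ℓ₀ : ℤ)) f)
    (ρ : ℝ) (hρ : ρ ∈ Set.Ioo (0 : ℝ) 1)
    (hφ : phi (Finset.Icc (1 : ℤ) (ℓ₀ : ℤ)) f ρ = 0)
    (hφ' : deriv (phi (Finset.Icc (1 : ℤ) (ℓ₀ : ℤ)) f) ρ = 0) :
    ∃ c : ℝ, ∀ μ : Measure Cfg, IsBernoulliProduct ρ μ → ∀ ℓ : ℕ, ℓ₀ ≤ ℓ →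
      Var μ (psiFun ℓ f) ≤ c / (ℓ : ℝ) ^ 2 := by
  obtain ⟨M, hM⟩ := exists_abs_phi_le hφ hφ'
  set K := (∑ T ∈ (Icc 1 (ℓ₀ : ℤ)).powerset, |f (cfgOf T)|) * (4 * ℓ₀ ^ 2)
  refine ⟨6 * M ^ 2 + 2 * K ^ 2, fun μ hμ ℓ hℓ => ?_⟩
  rcases Nat.eq_zero_or_pos ℓ with rfl | hℓpos
  · simp [Var_psiFun_zero hμ]
  have hρ0 := hρ.1.le
  have hρ1 := hρ.2.le
  calc Var μ (psiFun ℓ f)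
      ≤ ∑ S ∈ (Icc 1 (ℓ : ℤ)).powerset, bernoulliWeight ρ (Icc 1 (ℓ : ℤ)) S *
          (2 * M ^ 2 / ℓ ^ 4 * ((S.card : ℝ) - ℓ * ρ) ^ 4 + 2 * K ^ 2 / ℓ ^ 2) := by
        refine (Var_psiFun_le hμ ℓ f).trans (sum_le_sum fun S hS => ?_)
        refine mul_le_mul_of_nonneg_left (sq_condAvg_le hf hM hℓ ?_ hℓpos)
          (bernoulliWeight_nonneg hρ0 hρ1 S)
        exact (card_le_card (mem_powerset.mp hS)).trans_eq (card_Icc_one ℓ)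
    _ ≤ 3 * (2 * M ^ 2 / ℓ ^ 4) * (ℓ : ℝ) ^ 2 + 2 * K ^ 2 / ℓ ^ 2 := by
        have hA : (0 : ℝ) ≤ 2 * M ^ 2 / ℓ ^ 4 := by positivity
        simpa only [card_Icc_one] using sum_bernoulliWeight_mul_fourth_add_le
          (B := Icc 1 (ℓ : ℤ)) hρ0 hρ1 hA (2 * K ^ 2 / ℓ ^ 2)
    _ = (6 * M ^ 2 + 2 * K ^ 2) / ℓ ^ 2 := by field_simp; ring
end
end
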